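/- arXiv:2210.13559 — 5 statements merged into one kernel-verified Lean document; each statement's English description precedes it below -/
import Mathlib

section
/- Let r = (r₀,r₁,r₂) ∈ (ℤ₂∖{0})³ with v₂(r₀r₁r₂) ∈ {0,1}. Then r₀x₀² + r₁x₁² + r₂x₂² = 0 has a nonzero solution in ℚ₂³ if and only if: in case v₂(r₀r₁r₂) = 0, there exist indices i ≠ j with r_i + r_j ≡ 0 mod 4 (i.e. r_i + r_j ∈ 4ℤ₂); and in case v₂(r_k) = 1 for the (unique) index k, writing {i,j,k} = {0,1,2}, there exists s ∈ {0,1} with r_i + r_j + s·r_k ≡ 0 mod 8 (i.e. r_i + r_j + s·r_k ∈ 8ℤ₂). -/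
noncomputable section AuxQadic2

open Polynomial

private def phi2 : ℤ_[2] →+* ZMod 8 := PadicInt.toZModPow 3

private lemma eight_dvd_iff (x : ℤ_[2]) : (8 : ℤ_[2]) ∣ x ↔ phi2 x = 0 := by
  have : phi2 x = 0 ↔ x ∈ RingHom.ker (PadicInt.toZModPow (p := 2) 3) := Iff.rfl
  rw [this, PadicInt.ker_toZModPow, Ideal.mem_span_singleton]
  norm_num

private lemma phi2_natCast (n : ℕ) : phi2 (n : ℤ_[2]) = (n : ZMod 8) := map_natCast _ n

private lemma phi2_two : phi2 2 = 2 := by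
  rw [show (2:ℤ_[2]) = ((2:ℕ):ℤ_[2]) by push_cast; ring, phi2_natCast]; rfl

private lemma phi2_four : phi2 4 = 4 := by
  rw [show (4:ℤ_[2]) = ((4:ℕ):ℤ_[2]) by push_cast; ring, phi2_natCast]; rfl

private lemma dvd_of_phi2 (d : ℤ_[2]) (hd8 : d ∣ 8) (x : ℤ_[2]) (n : ℕ)
    (hn : d ∣ ((n : ℕ) : ℤ_[2])) (h : phi2 x = (n : ZMod 8)) : d ∣ x := by
  have h1 : (8 : ℤ_[2]) ∣ x - n := by
    rw [eight_dvd_iff, map_sub, phi2_natCast, h, sub_self]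
  have hx : x = (x - n) + n := by ring
  rw [hx]; exact dvd_add (hd8.trans h1) hn

private lemma two_dvd_of (x : ℤ_[2]) (h : phi2 x = 0 ∨ phi2 x = 2 ∨ phi2 x = 4 ∨ phi2 x = 6) :
    (2 : ℤ_[2]) ∣ x := by
  have h8 : (2:ℤ_[2]) ∣ 8 := ⟨4, by norm_num⟩
  rcases h with h | h | h | h
  · exact dvd_of_phi2 2 h8 x 0 ⟨0, by push_cast; ring⟩ (by exact_mod_cast h)
  · exact dvd_of_phi2 2 h8 x 2 ⟨1, by push_cast; ring⟩ (by exact_mod_cast h)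
  · exact dvd_of_phi2 2 h8 x 4 ⟨2, by push_cast; ring⟩ (by exact_mod_cast h)
  · exact dvd_of_phi2 2 h8 x 6 ⟨3, by push_cast; ring⟩ (by exact_mod_cast h)

private lemma four_dvd_of (x : ℤ_[2]) (h : phi2 x = 0 ∨ phi2 x = 4) : (4 : ℤ_[2]) ∣ x := by
  have h8 : (4:ℤ_[2]) ∣ 8 := ⟨2, by norm_num⟩
  rcases h with h | h
  · exact dvd_of_phi2 4 h8 x 0 ⟨0, by push_cast; ring⟩ (by exact_mod_cast h)
  · exact dvd_of_phi2 4 h8 x 4 ⟨1, by push_cast; ring⟩ (by exact_mod_cast h)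

private lemma phi2_four_dvd (x : ℤ_[2]) (h : (4 : ℤ_[2]) ∣ x) : phi2 x = 0 ∨ phi2 x = 4 := by
  obtain ⟨c, rfl⟩ := h
  rw [map_mul, phi2_four]
  generalize phi2 c = d
  revert d; decide

private lemma phi2_odd (x : ℤ_[2]) (h : ¬ (2 : ℤ_[2]) ∣ x) :
    phi2 x = 1 ∨ phi2 x = 3 ∨ phi2 x = 5 ∨ phi2 x = 7 := by
  have key : ∀ b : ZMod 8, (b = 0 ∨ b = 2 ∨ b = 4 ∨ b = 6) ∨ (b = 1 ∨ b = 3 ∨ b = 5 ∨ b = 7) := by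
    decide
  rcases key (phi2 x) with h' | h'
  · exact absurd (two_dvd_of x h') h
  · exact h'

private lemma not_two_dvd_one : ¬ (2 : ℤ_[2]) ∣ 1 := by
  rintro ⟨c, hc⟩
  have h := congrArg phi2 hc
  rw [map_one, map_mul, phi2_two] at h
  revert h
  generalize phi2 c = d
  revert d; decide

/-- units ≡ 1 mod 8 are squares, via Hensel -/
private lemma exists_sqrt (u : ℤ_[2]) (h : (8 : ℤ_[2]) ∣ (u - 1)) : ∃ y : ℤ_[2], y ^ 2 = u := by
  have h2 : ‖(2 : ℤ_[2])‖ = 1/2 := by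
    have := PadicInt.norm_p (p := 2)
    norm_num at this ⊢
    exact_mod_cast this
  have h8 : ‖(8 : ℤ_[2])‖ = 1/8 := by
    rw [show (8:ℤ_[2]) = 2 ^ 3 by norm_num, norm_pow, h2]; norm_num
  set F : Polynomial ℤ_[2] := X ^ 2 - C u with hF
  have heval : F.eval 1 = 1 - u := by simp [hF]
  have hderiv1 : F.derivative.eval 1 = 2 := by simp [hF, derivative_X_pow, one_add_one_eq_two]
  have hnorm : ‖F.eval 1‖ < ‖F.derivative.eval 1‖ ^ 2 := by
    rw [heval, hderiv1, h2]
    obtain ⟨t, ht⟩ := h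
    have : ‖(1 : ℤ_[2]) - u‖ ≤ 1/8 := by
      rw [show (1:ℤ_[2]) - u = -(u - 1) by ring, norm_neg, ht, norm_mul, h8]
      calc 1/8 * ‖t‖ ≤ 1/8 * 1 := by gcongr; exact PadicInt.norm_le_one t
        _ = 1/8 := by norm_num
    nlinarith
  obtain ⟨z, hz, -⟩ := hensels_lemma hnorm
  exact ⟨z, sub_eq_zero.mp (by simpa [hF] using hz)⟩

private lemma isUnit_of_not_two_dvd {a : ℤ_[2]} (ha : ¬ (2 : ℤ_[2]) ∣ a) : IsUnit a := by
  by_contra h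
  rw [PadicInt.not_isUnit_iff, PadicInt.norm_lt_one_iff_dvd] at h
  exact ha (by exact_mod_cast h)

private lemma not_two_dvd_of_val_zero {a : ℤ_[2]} (ha : a ≠ 0) (h : a.valuation = 0) :
    ¬ (2 : ℤ_[2]) ∣ a := by
  rintro ⟨c, rfl⟩
  have hc : c ≠ 0 := by rintro rfl; simp at ha
  have h1 : ((2 : ℤ_[2]) ^ 1 * c).valuation = 1 + c.valuation := by
    have := PadicInt.valuation_p_pow_mul (p := 2) 1 c hc
    simpa using this
  simp only [pow_one] at h1
  have := Nat.zero_le c.valuation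
  omega

private lemma val_one_decomp {a : ℤ_[2]} (ha : a ≠ 0) (h : a.valuation = 1) :
    ∃ u : ℤ_[2], a = 2 * u ∧ ¬ (2 : ℤ_[2]) ∣ u := by
  have hspec := PadicInt.unitCoeff_spec ha
  rw [h] at hspec
  refine ⟨(PadicInt.unitCoeff ha : ℤ_[2]), by simpa [mul_comm] using hspec, ?_⟩
  intro hdvd
  have hdvd' : ((2:ℕ):ℤ_[2]) ∣ (PadicInt.unitCoeff ha : ℤ_[2]) := by exact_mod_cast hdvd
  rw [← PadicInt.norm_lt_one_iff_dvd, PadicInt.norm_units] at hdvd'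
  norm_num at hdvd'

private lemma valuation_mul' {a b : ℤ_[2]} (ha : a ≠ 0) (hb : b ≠ 0) :
    (a * b).valuation = a.valuation + b.valuation := by
  exact PadicInt.valuation_mul ha hb

/-! ZMod 8 `decide` facts -/

private lemma sq_cases (a : ZMod 8) : a^2 = 0 ∨ a^2 = 1 ∨ a^2 = 4 := by revert a; decide

private lemma odd_sq {a : ZMod 8} (h : a = 1 ∨ a = 3 ∨ a = 5 ∨ a = 7) : a^2 = 1 := by
  revert h; revert a; decide

set_option maxHeartbeats 1000000 in
private lemma unit_key (b0 b1 b2 s0 s1 s2 : ZMod 8)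
    (hb0 : b0=1∨b0=3∨b0=5∨b0=7) (hb1 : b1=1∨b1=3∨b1=5∨b1=7) (hb2 : b2=1∨b2=3∨b2=5∨b2=7)
    (hs0 : s0=0∨s0=1∨s0=4) (hs1 : s1=0∨s1=1∨s1=4) (hs2 : s2=0∨s2=1∨s2=4)
    (hone : s0=1∨s1=1∨s2=1)
    (he : b0*s0+b1*s1+b2*s2 = 0) :
    ((b0+b1=0∨b0+b1=4) ∨ (b0+b2=0∨b0+b2=4) ∨ (b1+b2=0∨b1+b2=4)) := by
  rcases hs0 with rfl|rfl|rfl <;> rcases hs1 with rfl|rfl|rfl <;> rcases hs2 with rfl|rfl|rfl <;>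
    revert he hone <;> revert hb0 hb1 hb2 <;> revert b0 b1 b2 <;> decide

set_option maxHeartbeats 1000000 in
private lemma mixed_key (B C D s0 s1 s2 : ZMod 8)
    (hB : B=1∨B=3∨B=5∨B=7) (hC : C=1∨C=3∨C=5∨C=7) (hD : D=2∨D=6)
    (hs0 : s0=0∨s0=1∨s0=4) (hs1 : s1=0∨s1=1∨s1=4) (hs2 : s2=0∨s2=1∨s2=4)
    (hone : s0=1∨s1=1∨s2=1)
    (he : B*s0+C*s1+D*s2 = 0) :
    (B+C=0 ∨ B+C+D=0) := by
  rcases hs0 with rfl|rfl|rfl <;> rcases hs1 with rfl|rfl|rfl <;> rcases hs2 with rfl|rfl|rfl <;>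
    revert he hone <;> revert hB hC hD <;> revert B C D <;> decide

private lemma choose_t_key (u v : ZMod 8) (hu : u = 0 ∨ u = 4) (hv : v=1∨v=3∨v=5∨v=7) :
    u = 0 ∨ u + 4*v = 0 := by revert hu hv; revert u v; decide

/-- choose t ∈ {0,2} with 8 ∣ A + t^2 c -/
private lemma choose_t (A c : ℤ_[2]) (h4 : (4:ℤ_[2]) ∣ A) (hc : ¬ (2:ℤ_[2]) ∣ c) :
    ∃ t : ℤ_[2], (8:ℤ_[2]) ∣ (A + t^2*c) := by
  rcases choose_t_key (phi2 A) (phi2 c) (phi2_four_dvd A h4) (phi2_odd c hc) with h | h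
  · exact ⟨0, by rw [eight_dvd_iff, map_add, map_mul, map_pow, map_zero, h]; ring⟩
  · refine ⟨2, ?_⟩
    rw [eight_dvd_iff, map_add, map_mul, map_pow, phi2_two]
    rw [show (2:ZMod 8)^2 = 4 by decide] at *
    linear_combination h

/-- main construction: a unit coefficient `a`, a choice `t`, produce a solution -/
private lemma construct (a b c t : ℤ_[2]) (ha : ¬ (2:ℤ_[2]) ∣ a)
    (h : (8:ℤ_[2]) ∣ (a + b + t^2*c)) :
    ∃ X Z : ℤ_[2], a * X^2 + b * 1^2 + c * Z^2 = 0 := by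
  obtain ⟨ua, hua⟩ := isUnit_of_not_two_dvd ha
  set v : ℤ_[2] := ((ua⁻¹ : ℤ_[2]ˣ) : ℤ_[2]) with hv
  have hva : v * a = 1 := by
    rw [hv, ← hua]; exact_mod_cast ua.inv_mul
  set u : ℤ_[2] := -(v * (b + t^2*c)) with hu
  have h81 : (8:ℤ_[2]) ∣ (u - 1) := by
    have : u - 1 = -v * (a + b + t^2*c) := by rw [hu]; linear_combination hva
    rw [this]
    exact Dvd.dvd.mul_left h _
  obtain ⟨y, hy⟩ := exists_sqrt u h81
  refine ⟨y, t, ?_⟩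
  rw [hy, hu]
  linear_combination (-(b + t^2*c)) * hva

/-! descent to a primitive integral solution -/

private lemma max3 (u v w : ℚ_[2]) :
    ∃ m : ℚ_[2], ‖u‖≤‖m‖ ∧ ‖v‖≤‖m‖ ∧ ‖w‖≤‖m‖ ∧ (m=u∨m=v∨m=w) := by
  rcases le_total ‖u‖ ‖v‖ with h|h <;> rcases le_total ‖v‖ ‖w‖ with h'|h' <;>
    rcases le_total ‖u‖ ‖w‖ with h''|h'' <;>
    first
    | exact ⟨u, le_refl _, by linarith, by linarith, Or.inl rfl⟩
    | exact ⟨v, by linarith, le_refl _, by linarith, Or.inr (Or.inl rfl)⟩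
    | exact ⟨w, by linarith, by linarith, le_refl _, Or.inr (Or.inr rfl)⟩

private lemma descend (a b c : ℤ_[2]) (x : Fin 3 → ℚ_[2]) (hx0 : x ≠ 0)
    (hxe : (a:ℚ_[2]) * x 0 ^ 2 + (b:ℚ_[2]) * x 1 ^ 2 + (c:ℚ_[2]) * x 2 ^ 2 = 0) :
    ∃ X Y Z : ℤ_[2], ((¬ (2:ℤ_[2]) ∣ X) ∨ (¬ (2:ℤ_[2]) ∣ Y) ∨ (¬ (2:ℤ_[2]) ∣ Z)) ∧
      a * X^2 + b * Y^2 + c * Z^2 = 0 := by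
  have hnz : x 0 ≠ 0 ∨ x 1 ≠ 0 ∨ x 2 ≠ 0 := by
    by_contra hcon
    push_neg at hcon
    obtain ⟨e0, e1, e2⟩ := hcon
    exact hx0 (funext fun l => by fin_cases l <;> assumption)
  obtain ⟨m, hm0, hm1, hm2, hmcase⟩ := max3 (x 0) (x 1) (x 2)
  have hmne : m ≠ 0 := by
    rw [← norm_pos_iff]
    rcases hnz with h|h|h
    · exact lt_of_lt_of_le (norm_pos_iff.mpr h) hm0
    · exact lt_of_lt_of_le (norm_pos_iff.mpr h) hm1
    · exact lt_of_lt_of_le (norm_pos_iff.mpr h) hm2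
  have hmpos : 0 < ‖m‖ := norm_pos_iff.mpr hmne
  have mem : ∀ l : Fin 3, ‖x l / m‖ ≤ 1 := by
    intro l
    rw [norm_div, div_le_one hmpos]
    fin_cases l <;> assumption
  set X : ℤ_[2] := ⟨x 0 / m, mem 0⟩ with hX
  set Y : ℤ_[2] := ⟨x 1 / m, mem 1⟩ with hY
  set Z : ℤ_[2] := ⟨x 2 / m, mem 2⟩ with hZ
  have hqeq : (a:ℚ_[2]) * (x 0 / m)^2 + (b:ℚ_[2]) * (x 1 / m)^2 + (c:ℚ_[2]) * (x 2 / m)^2 = 0 := by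
    field_simp
    linear_combination hxe
  have hzeq : a * X^2 + b * Y^2 + c * Z^2 = 0 := by
    have : ((a * X^2 + b * Y^2 + c * Z^2 : ℤ_[2]) : ℚ_[2]) = 0 := by
      push_cast
      exact hqeq
    exact PadicInt.coe_eq_zero.mp this
  refine ⟨X, Y, Z, ?_, hzeq⟩
  rcases hmcase with h|h|h
  · refine Or.inl ?_
    have hne : x 0 ≠ 0 := h ▸ hmne
    have : X = 1 := Subtype.ext (show x 0 / m = 1 by rw [h]; exact div_self hne)
    rw [this]; exact not_two_dvd_one
  · refine Or.inr (Or.inl ?_)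
    have hne : x 1 ≠ 0 := h ▸ hmne
    have : Y = 1 := Subtype.ext (show x 1 / m = 1 by rw [h]; exact div_self hne)
    rw [this]; exact not_two_dvd_one
  · refine Or.inr (Or.inr ?_)
    have hne : x 2 ≠ 0 := h ▸ hmne
    have : Z = 1 := Subtype.ext (show x 2 / m = 1 by rw [h]; exact div_self hne)
    rw [this]; exact not_two_dvd_one

/-! solvability predicate and permutations -/

private def Sol (c : Fin 3 → ℤ_[2]) : Prop :=
  ∃ x : Fin 3 → ℚ_[2], x ≠ 0 ∧
    (c 0 : ℚ_[2]) * x 0 ^ 2 + (c 1 : ℚ_[2]) * x 1 ^ 2 + (c 2 : ℚ_[2]) * x 2 ^ 2 = 0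

private lemma Sol_sum (c : Fin 3 → ℤ_[2]) :
    Sol c ↔ ∃ x : Fin 3 → ℚ_[2], x ≠ 0 ∧ ∑ l : Fin 3, (c l : ℚ_[2]) * x l ^ 2 = 0 := by
  unfold Sol
  constructor <;> rintro ⟨x, hx0, hxe⟩ <;> refine ⟨x, hx0, ?_⟩
  · rw [Fin.sum_univ_three]; exact hxe
  · rw [Fin.sum_univ_three] at hxe; exact hxe

private lemma Sol_comp (c : Fin 3 → ℤ_[2]) (σ : Equiv.Perm (Fin 3)) (h : Sol (c ∘ σ)) :
    Sol c := by
  rw [Sol_sum] at h ⊢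
  obtain ⟨x, hx0, hxe⟩ := h
  refine ⟨x ∘ σ.symm, ?_, ?_⟩
  · intro hcon
    apply hx0
    funext l
    have := congrFun hcon (σ l)
    simpa using this
  · rw [← Equiv.sum_comp σ (fun l => (c l : ℚ_[2]) * (x ∘ σ.symm) l ^ 2)]
    simpa using hxe

private lemma Sol_perm3 (c : Fin 3 → ℤ_[2]) (i j k : Fin 3)
    (hij : i ≠ j) (hjk : j ≠ k) (hik : i ≠ k) :
    Sol c ↔ Sol ![c i, c j, c k] := by
  have hinj : Function.Injective (![i, j, k] : Fin 3 → Fin 3) := by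
    intro a b hab
    fin_cases a <;> fin_cases b <;>
      first
        | rfl
        | exact absurd hab hij
        | exact absurd hab hjk
        | exact absurd hab hik
        | exact absurd hab.symm hij
        | exact absurd hab.symm hjk
        | exact absurd hab.symm hik
  have hbij : Function.Bijective (![i, j, k] : Fin 3 → Fin 3) := by
    rw [Fintype.bijective_iff_injective_and_card]
    exact ⟨hinj, rfl⟩
  set σ : Equiv.Perm (Fin 3) := Equiv.ofBijective _ hbij with hσ
  have hcomp : c ∘ σ = ![c i, c j, c k] := by
    funext l
    fin_cases l <;> rfl
  constructor
  · intro h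
    rw [← hcomp]
    apply Sol_comp (c ∘ σ) σ.symm
    have : (c ∘ σ) ∘ σ.symm = c := by funext l; simp
    rw [this]; exact h
  · intro h
    exact Sol_comp c σ (by rw [hcomp]; exact h)

/-! master lemmas -/

private lemma unit_reverse (a b c : ℤ_[2]) (ha : ¬ (2:ℤ_[2]) ∣ a) (hc : ¬ (2:ℤ_[2]) ∣ c)
    (h4 : (4:ℤ_[2]) ∣ (a + b)) : Sol ![a, b, c] := by
  obtain ⟨t, ht⟩ := choose_t (a + b) c h4 hc
  obtain ⟨X, Z, hXZ⟩ := construct a b c t ha (by rw [add_assoc] at ht ⊢; exact ht)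
  refine ⟨![(X : ℚ_[2]), 1, (Z : ℚ_[2])], ?_, ?_⟩
  · intro hcon
    have := congrFun hcon 1
    simp at this
  · show (a:ℚ_[2]) * (X:ℚ_[2])^2 + (b:ℚ_[2]) * (1:ℚ_[2])^2 + (c:ℚ_[2]) * (Z:ℚ_[2])^2 = 0
    have : ((a * X^2 + b * 1^2 + c * Z^2 : ℤ_[2]) : ℚ_[2]) = 0 := by rw [hXZ]; push_cast; ring
    push_cast at this
    linear_combination this

private lemma mixed_master (a b c : ℤ_[2]) (ha : ¬ (2:ℤ_[2]) ∣ a) (hb : ¬ (2:ℤ_[2]) ∣ b)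
    (hc : ∃ u : ℤ_[2], c = 2 * u ∧ ¬ (2:ℤ_[2]) ∣ u) :
    Sol ![a, b, c] ↔ ∃ s : ℤ_[2], (s = 0 ∨ s = 1) ∧ (8:ℤ_[2]) ∣ (a + b + s * c) := by
  obtain ⟨w, hw, hwodd⟩ := hc
  constructor
  · rintro ⟨x, hx0, hxe⟩
    have hxe' : (a:ℚ_[2]) * x 0 ^ 2 + (b:ℚ_[2]) * x 1 ^ 2 + (c:ℚ_[2]) * x 2 ^ 2 = 0 := by
      have h0 : ((![a,b,c] 0 : ℤ_[2]) : ℚ_[2]) = (a : ℚ_[2]) := rfl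
      have h1 : ((![a,b,c] 1 : ℤ_[2]) : ℚ_[2]) = (b : ℚ_[2]) := rfl
      have h2 : ((![a,b,c] 2 : ℤ_[2]) : ℚ_[2]) = (c : ℚ_[2]) := rfl
      rw [h0, h1, h2] at hxe
      exact hxe
    obtain ⟨X, Y, Z, hodd, hzeq⟩ := descend a b c x hx0 hxe'
    have hphi := congrArg phi2 hzeq
    simp only [map_add, map_mul, map_pow, map_zero] at hphi
    have hD : phi2 c = 2 ∨ phi2 c = 6 := by
      have : phi2 c = 2 * phi2 w := by rw [hw, map_mul, phi2_two]
      rcases phi2_odd w hwodd with h|h|h|h <;> rw [h] at this <;> simp [this] <;> decide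
    have hsq : ∀ T : ℤ_[2], (phi2 T)^2 = 0 ∨ (phi2 T)^2 = 1 ∨ (phi2 T)^2 = 4 :=
      fun T => sq_cases (phi2 T)
    have hone : (phi2 X)^2 = 1 ∨ (phi2 Y)^2 = 1 ∨ (phi2 Z)^2 = 1 := by
      rcases hodd with h|h|h
      · exact Or.inl (odd_sq (phi2_odd X h))
      · exact Or.inr (Or.inl (odd_sq (phi2_odd Y h)))
      · exact Or.inr (Or.inr (odd_sq (phi2_odd Z h)))
    rcases mixed_key (phi2 a) (phi2 b) (phi2 c) ((phi2 X)^2) ((phi2 Y)^2) ((phi2 Z)^2)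
      (phi2_odd a ha) (phi2_odd b hb) hD (hsq X) (hsq Y) (hsq Z) hone hphi with h | h
    · refine ⟨0, Or.inl rfl, ?_⟩
      rw [eight_dvd_iff, map_add, map_add, map_mul, map_zero, zero_mul, add_zero]
      exact h
    · refine ⟨1, Or.inr rfl, ?_⟩
      rw [eight_dvd_iff, map_add, map_add, map_mul, map_one, one_mul]
      exact h
  · rintro ⟨s, hs, hdvd⟩
    have hss : s^2 = s := by rcases hs with rfl|rfl <;> ring
    obtain ⟨X, Z, hXZ⟩ := construct a b c s ha (by rw [hss]; exact hdvd)
    refine ⟨![(X : ℚ_[2]), 1, (Z : ℚ_[2])], ?_, ?_⟩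
    · intro hcon
      have := congrFun hcon 1
      simp at this
    · show (a:ℚ_[2]) * (X:ℚ_[2])^2 + (b:ℚ_[2]) * (1:ℚ_[2])^2 + (c:ℚ_[2]) * (Z:ℚ_[2])^2 = 0
      have : ((a * X^2 + b * 1^2 + c * Z^2 : ℤ_[2]) : ℚ_[2]) = 0 := by rw [hXZ]; push_cast; ring
      push_cast at this
      linear_combination this

end AuxQadic2

/-- Solubility criterion over `ℚ₂` for diagonal ternary quadratic forms with coefficients
in `ℤ₂` whose product has 2-adic valuation 0 or 1. -/
theorem qadic2_diagonal_conic_criterion (r : Fin 3 → ℤ_[2])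
    (hr : ∀ i, r i ≠ 0)
    (hval : (r 0 * r 1 * r 2).valuation = 0 ∨ (r 0 * r 1 * r 2).valuation = 1) :
    ((r 0 * r 1 * r 2).valuation = 0 →
      ((∃ x : Fin 3 → ℚ_[2], x ≠ 0 ∧
          (r 0 : ℚ_[2]) * x 0 ^ 2 + (r 1 : ℚ_[2]) * x 1 ^ 2 + (r 2 : ℚ_[2]) * x 2 ^ 2 = 0) ↔
        ∃ i j : Fin 3, i ≠ j ∧ (4 : ℤ_[2]) ∣ (r i + r j))) ∧
    (∀ i j k : Fin 3, i ≠ j → j ≠ k → i ≠ k → (r k).valuation = 1 →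
      ((∃ x : Fin 3 → ℚ_[2], x ≠ 0 ∧
          (r 0 : ℚ_[2]) * x 0 ^ 2 + (r 1 : ℚ_[2]) * x 1 ^ 2 + (r 2 : ℚ_[2]) * x 2 ^ 2 = 0) ↔
        ∃ s : ℤ_[2], (s = 0 ∨ s = 1) ∧ (8 : ℤ_[2]) ∣ (r i + r j + s * r k))) := by
  have hvsum : (r 0 * r 1 * r 2).valuation =
      (r 0).valuation + (r 1).valuation + (r 2).valuation := by
    rw [valuation_mul' (mul_ne_zero (hr 0) (hr 1)) (hr 2), valuation_mul' (hr 0) (hr 1)]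
  have hv0 := Nat.zero_le (r 0).valuation
  have hv1 := Nat.zero_le (r 1).valuation
  have hv2 := Nat.zero_le (r 2).valuation
  constructor
  · -- unit case
    intro hval0
    have hodd : ∀ l : Fin 3, ¬ (2:ℤ_[2]) ∣ r l := by
      intro l
      have h0 : (r 0).valuation = 0 := by omega
      have h1 : (r 1).valuation = 0 := by omega
      have h2 : (r 2).valuation = 0 := by omega
      fin_cases l
      · exact not_two_dvd_of_val_zero (hr 0) h0
      · exact not_two_dvd_of_val_zero (hr 1) h1
      · exact not_two_dvd_of_val_zero (hr 2) h2
    constructor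
    · rintro ⟨x, hx0, hxe⟩
      obtain ⟨X, Y, Z, hoddz, hzeq⟩ := descend (r 0) (r 1) (r 2) x hx0 hxe
      have hphi := congrArg phi2 hzeq
      simp only [map_add, map_mul, map_pow, map_zero] at hphi
      have hsq : ∀ T : ℤ_[2], (phi2 T)^2 = 0 ∨ (phi2 T)^2 = 1 ∨ (phi2 T)^2 = 4 :=
        fun T => sq_cases (phi2 T)
      have hone : (phi2 X)^2 = 1 ∨ (phi2 Y)^2 = 1 ∨ (phi2 Z)^2 = 1 := by
        rcases hoddz with h|h|h
        · exact Or.inl (odd_sq (phi2_odd X h))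
        · exact Or.inr (Or.inl (odd_sq (phi2_odd Y h)))
        · exact Or.inr (Or.inr (odd_sq (phi2_odd Z h)))
      rcases unit_key (phi2 (r 0)) (phi2 (r 1)) (phi2 (r 2))
        ((phi2 X)^2) ((phi2 Y)^2) ((phi2 Z)^2)
        (phi2_odd _ (hodd 0)) (phi2_odd _ (hodd 1)) (phi2_odd _ (hodd 2))
        (hsq X) (hsq Y) (hsq Z) hone hphi with h | h | h
      · exact ⟨0, 1, by decide, four_dvd_of _ (by rw [map_add]; exact h)⟩
      · exact ⟨0, 2, by decide, four_dvd_of _ (by rw [map_add]; exact h)⟩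
      · exact ⟨1, 2, by decide, four_dvd_of _ (by rw [map_add]; exact h)⟩
    · rintro ⟨i, j, hij, h4⟩
      fin_cases i <;> fin_cases j <;>
        first
        | exact absurd rfl hij
        | (exact (Sol_perm3 r 0 1 2 (by decide) (by decide) (by decide)).mpr
            (unit_reverse _ _ _ (hodd 0) (hodd 2) h4))
        | (exact (Sol_perm3 r 0 2 1 (by decide) (by decide) (by decide)).mpr
            (unit_reverse _ _ _ (hodd 0) (hodd 1) h4))
        | (exact (Sol_perm3 r 1 0 2 (by decide) (by decide) (by decide)).mpr
            (unit_reverse _ _ _ (hodd 1) (hodd 2) h4))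
        | (exact (Sol_perm3 r 1 2 0 (by decide) (by decide) (by decide)).mpr
            (unit_reverse _ _ _ (hodd 1) (hodd 0) h4))
        | (exact (Sol_perm3 r 2 0 1 (by decide) (by decide) (by decide)).mpr
            (unit_reverse _ _ _ (hodd 2) (hodd 1) h4))
        | (exact (Sol_perm3 r 2 1 0 (by decide) (by decide) (by decide)).mpr
            (unit_reverse _ _ _ (hodd 2) (hodd 0) h4))
  · -- mixed case
    intro i j k hij hjk hik hvk
    have hsum1 : (r 0).valuation + (r 1).valuation + (r 2).valuation ≤ 1 := by
      rcases hval with h|h <;> omega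
    fin_cases i <;> fin_cases j <;> fin_cases k <;>
      first
      | exact absurd rfl hij
      | exact absurd rfl hjk
      | exact absurd rfl hik
      | (have hvk' : (r 2).valuation = 1 := hvk
         exact (Sol_perm3 r 0 1 2 (by decide) (by decide) (by decide)).trans
           (mixed_master _ _ _ (not_two_dvd_of_val_zero (hr 0) (by omega))
             (not_two_dvd_of_val_zero (hr 1) (by omega)) (val_one_decomp (hr 2) hvk')))
      | (have hvk' : (r 1).valuation = 1 := hvk
         exact (Sol_perm3 r 0 2 1 (by decide) (by decide) (by decide)).trans
           (mixed_master _ _ _ (not_two_dvd_of_val_zero (hr 0) (by omega))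
             (not_two_dvd_of_val_zero (hr 2) (by omega)) (val_one_decomp (hr 1) hvk')))
      | (have hvk' : (r 2).valuation = 1 := hvk
         exact (Sol_perm3 r 1 0 2 (by decide) (by decide) (by decide)).trans
           (mixed_master _ _ _ (not_two_dvd_of_val_zero (hr 1) (by omega))
             (not_two_dvd_of_val_zero (hr 0) (by omega)) (val_one_decomp (hr 2) hvk')))
      | (have hvk' : (r 0).valuation = 1 := hvk
         exact (Sol_perm3 r 1 2 0 (by decide) (by decide) (by decide)).trans
           (mixed_master _ _ _ (not_two_dvd_of_val_zero (hr 1) (by omega))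
             (not_two_dvd_of_val_zero (hr 2) (by omega)) (val_one_decomp (hr 0) hvk')))
      | (have hvk' : (r 1).valuation = 1 := hvk
         exact (Sol_perm3 r 2 0 1 (by decide) (by decide) (by decide)).trans
           (mixed_master _ _ _ (not_two_dvd_of_val_zero (hr 2) (by omega))
             (not_two_dvd_of_val_zero (hr 0) (by omega)) (val_one_decomp (hr 1) hvk')))
      | (have hvk' : (r 0).valuation = 1 := hvk
         exact (Sol_perm3 r 2 1 0 (by decide) (by decide) (by decide)).trans
           (mixed_master _ _ _ (not_two_dvd_of_val_zero (hr 2) (by omega))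
             (not_two_dvd_of_val_zero (hr 1) (by omega)) (val_one_decomp (hr 0) hvk')))
end

section
/- Let g₁,g₂,g₃ : ℕ → ℂ be multiplicative functions with |g_i(n)| ≤ 1 for all n and i. Then for all X₁,X₂,X₃ > 1, all real z with 1 ≤ z ≤ (X₁X₂X₃)^{1/4}, and all q ∈ ℕ³, a ∈ ℤ³ with gcd(a_i,q_i) = 1 for all i: Σ_{k ∈ ℕ, k ≤ z} μ(k)·Σ_{n ∈ ℕ³ : n_i ≤ X_i, k² | n₁n₂n₃, n_i ≡ a_i mod q_i for all i} g₁(n₁)g₂(n₂)g₃(n₃) = Σ_{n ∈ ℕ³ : n_i ≤ X_i, n_i ≡ a_i mod q_i for all i} μ²(n₁n₂n₃)·g₁(n₁)g₂(n₂)g₃(n₃) + O( (X₁X₂X₃/z^{1/2})·(log(X₁X₂X₃))³ ), where the implied constant is absolute. -/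
open scoped BigOperators

attribute [local instance] Classical.propDecidable

open Finset ArithmeticFunction

/-- squarefree part -/
noncomputable def sqfA (n : ℕ) : ℕ := (Nat.sq_mul_squarefree n).choose
/-- square-root part -/
noncomputable def sqfB (n : ℕ) : ℕ := (Nat.sq_mul_squarefree n).choose_spec.choose

lemma sqf_spec (n : ℕ) : (sqfB n) ^ 2 * sqfA n = n ∧ Squarefree (sqfA n) :=
  (Nat.sq_mul_squarefree n).choose_spec.choose_spec

lemma sqf_ne_zero {n : ℕ} (hn : n ≠ 0) : sqfA n ≠ 0 ∧ sqfB n ≠ 0 := by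
  obtain ⟨h1, _⟩ := sqf_spec n
  constructor <;> (rintro h; rw [h] at h1; simp at h1; exact hn h1.symm)

lemma sq_dvd_iff_dvd_sqfB {k n : ℕ} (hn : n ≠ 0) (hk : k ≠ 0) :
    k ^ 2 ∣ n ↔ k ∣ sqfB n := by
  obtain ⟨h1, h2⟩ := sqf_spec n
  obtain ⟨ha, hb⟩ := sqf_ne_zero hn
  constructor
  · intro hd
    rw [← Nat.factorization_le_iff_dvd hk hb, Finsupp.le_def]
    rw [← Nat.factorization_le_iff_dvd (pow_ne_zero 2 hk) hn, Finsupp.le_def] at hd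
    intro p
    have hdp := hd p
    rw [← h1, Nat.factorization_mul (pow_ne_zero 2 hb) ha, Nat.factorization_pow,
      Nat.factorization_pow] at hdp
    have h21 := h2.natFactorization_le_one p
    simp only [Finsupp.coe_add, Finsupp.coe_smul, Pi.add_apply, Pi.smul_apply,
      smul_eq_mul] at hdp
    omega
  · intro h
    calc k ^ 2 ∣ (sqfB n) ^ 2 := pow_dvd_pow_of_dvd h 2
    _ ∣ n := Dvd.intro _ h1

lemma moebius_sq_eq_sum {n L : ℕ} (h1 : n ≠ 0) (hL : n ≤ L) :
    ((moebius n : ℤ) : ℂ) ^ 2 =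
      ∑ k ∈ Finset.Ioc 0 L, if k ^ 2 ∣ n then ((moebius k : ℤ) : ℂ) else 0 := by
  classical
  obtain ⟨hn1, hn2⟩ := sqf_spec n
  obtain ⟨ha, hb⟩ := sqf_ne_zero h1
  have hfil : (Finset.Ioc 0 L).filter (fun k => k ^ 2 ∣ n) = (sqfB n).divisors := by
    ext k
    simp only [Finset.mem_filter, Finset.mem_Ioc, Nat.mem_divisors]
    constructor
    · rintro ⟨⟨hk0, _⟩, hkd⟩
      exact ⟨(sq_dvd_iff_dvd_sqfB h1 hk0.ne').1 hkd, hb⟩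
    · rintro ⟨hkb, _⟩
      have hk0 : k ≠ 0 := by rintro rfl; exact hb (Nat.eq_zero_of_zero_dvd hkb)
      have hkL : k ≤ L := by
        have h2' : k ≤ sqfB n := Nat.le_of_dvd (Nat.pos_of_ne_zero hb) hkb
        have h3 : sqfB n ≤ n := by
          calc sqfB n ≤ (sqfB n) ^ 2 * sqfA n :=
                le_mul_of_le_of_one_le (Nat.le_self_pow two_ne_zero _)
                  (Nat.one_le_iff_ne_zero.2 ha)
          _ = n := hn1
        omega
      exact ⟨⟨Nat.pos_of_ne_zero hk0, hkL⟩, (sq_dvd_iff_dvd_sqfB h1 hk0).2 hkb⟩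
  rw [← Finset.sum_filter, hfil]
  have hsum : (∑ d ∈ (sqfB n).divisors, (moebius d : ℤ)) = if sqfB n = 1 then 1 else 0 := by
    have h := ArithmeticFunction.coe_mul_zeta_apply (f := (moebius : ArithmeticFunction ℤ))
      (x := sqfB n)
    rw [ArithmeticFunction.moebius_mul_coe_zeta] at h
    rw [← h, ArithmeticFunction.one_apply]
  have hsumC : (∑ d ∈ (sqfB n).divisors, ((moebius d : ℤ) : ℂ)) =
      if sqfB n = 1 then 1 else 0 := by
    rw [← Int.cast_sum, hsum]
    split <;> simp
  rw [hsumC]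
  by_cases hb1 : sqfB n = 1
  · have hsq : Squarefree n := by rw [← hn1, hb1]; simpa using hn2
    rw [moebius_apply_of_squarefree hsq]
    push_cast
    rw [← pow_mul, mul_comm (cardFactors n) 2, pow_mul]
    norm_num [hb1]
  · have hnsq : ¬ Squarefree n := by
      intro hs
      have hdvd : sqfB n * sqfB n ∣ (sqfB n) ^ 2 * sqfA n := by
        rw [← pow_two]; exact dvd_mul_right _ _
      rw [hn1] at hdvd
      exact hb1 (Nat.isUnit_iff.1 (hs _ hdvd))
    rw [moebius_eq_zero_of_not_squarefree hnsq]
    simp [hb1]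

lemma sum_inv_mul_sqrt_aux : ∀ L : ℕ, 1 ≤ L →
    ∑ n ∈ Finset.Ioc 0 L, 1 / ((n : ℝ) * Real.sqrt n) ≤ 3 - 2 / Real.sqrt L := by
  intro L
  induction L with
  | zero => omega
  | succ L ih =>
    intro _
    rcases Nat.eq_or_lt_of_le (Nat.one_le_iff_ne_zero.2 (Nat.succ_ne_zero L)) with h | h
    · have h' : L = 0 := by omega
      subst h'
      norm_num
    · have hL1 : 1 ≤ L := by omega
      rw [Finset.sum_Ioc_succ_top (Nat.zero_le L)]
      have ih' := ih hL1
      have hs : (1:ℝ) ≤ Real.sqrt L := by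
        rw [show (1:ℝ) = Real.sqrt 1 by simp]
        exact Real.sqrt_le_sqrt (by exact_mod_cast hL1)
      have hs0 : (0:ℝ) < Real.sqrt L := by linarith
      have ht0 : (0:ℝ) < Real.sqrt (L+1) := by
        apply Real.sqrt_pos.2; positivity
      have hst : Real.sqrt L ≤ Real.sqrt (L+1) := Real.sqrt_le_sqrt (by linarith)
      have hsq : (Real.sqrt L)^2 = (L:ℝ) := Real.sq_sqrt (by positivity)
      have htq : (Real.sqrt (L+1))^2 = (L:ℝ)+1 := by
        rw [Real.sq_sqrt (by positivity)]
      have key : 1 / (((L:ℝ)+1) * Real.sqrt (L+1)) ≤ 2 / Real.sqrt L - 2 / Real.sqrt (L+1) := by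
        set s := Real.sqrt L
        set t := Real.sqrt (L+1)
        rw [← htq]
        rw [div_sub_div _ _ (ne_of_gt hs0) (ne_of_gt ht0),
          div_le_div_iff₀ (by positivity) (by positivity)]
        ring_nf
        nlinarith [mul_pos hs0 ht0, mul_nonneg (mul_nonneg hs0.le ht0.le) (sub_nonneg.2 hst),
          sq_nonneg (t - s), sq_nonneg (t + s)]
      push_cast
      push_cast at ih' key
      linarith

lemma sum_inv_mul_sqrt_le (L : ℕ) :
    ∑ n ∈ Finset.Ioc 0 L, 1 / ((n : ℝ) * Real.sqrt n) ≤ 3 := by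
  rcases Nat.eq_zero_or_pos L with h | h
  · simp [h]
  · have h2 : 0 ≤ 2 / Real.sqrt L := by positivity
    linarith [sum_inv_mul_sqrt_aux L h]

/-- triples with given product -/
def trip (m : ℕ) : Finset (ℕ × ℕ × ℕ) :=
  (Finset.Ioc 0 m ×ˢ Finset.Ioc 0 m ×ˢ Finset.Ioc 0 m).filter
    (fun d => d.1 * d.2.1 * d.2.2 = m)

lemma mem_trip {m : ℕ} (hm : m ≠ 0) {d : ℕ × ℕ × ℕ} :
    d ∈ trip m ↔ d.1 * d.2.1 * d.2.2 = m := by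
  obtain ⟨d1, d2, d3⟩ := d
  simp only [trip, Finset.mem_filter, Finset.mem_product, Finset.mem_Ioc]
  refine ⟨fun h => h.2, fun h => ⟨?_, h⟩⟩
  have h1 : d1 ∣ m := ⟨d2 * d3, by rw [← h]; ring⟩
  have h2 : d2 ∣ m := ⟨d1 * d3, by rw [← h]; ring⟩
  have h3 : d3 ∣ m := ⟨d1 * d2, by rw [← h]; ring⟩
  have hm' : 0 < m := Nat.pos_of_ne_zero hm
  have hpos : 0 < d1 * d2 * d3 := h ▸ hm'
  refine ⟨⟨?_, Nat.le_of_dvd hm' h1⟩, ⟨?_, Nat.le_of_dvd hm' h2⟩, ⟨?_, Nat.le_of_dvd hm' h3⟩⟩ <;>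
    by_contra hc <;> push_neg at hc <;> (have h0 : _ = 0 := Nat.le_zero.1 hc) <;>
    subst h0 <;> simp at hpos

lemma count_le_sum (k N1 N2 N3 : ℕ) (hk : k ≠ 0) :
    ((Finset.Ioc 0 N1 ×ˢ Finset.Ioc 0 N2 ×ˢ Finset.Ioc 0 N3).filter
        (fun n : ℕ × ℕ × ℕ => k ^ 2 ∣ n.1 * n.2.1 * n.2.2)).card
      ≤ ∑ d ∈ trip (k ^ 2), (N1 / d.1) * (N2 / d.2.1) * (N3 / d.2.2) := by
  classical
  have hk2 : k ^ 2 ≠ 0 := pow_ne_zero 2 hk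
  set M : ℕ × ℕ × ℕ → Finset (ℕ × ℕ × ℕ) := fun d =>
    ((Finset.Ioc 0 N1).filter (d.1 ∣ ·)) ×ˢ ((Finset.Ioc 0 N2).filter (d.2.1 ∣ ·)) ×ˢ
      ((Finset.Ioc 0 N3).filter (d.2.2 ∣ ·)) with hM
  have hsub : (Finset.Ioc 0 N1 ×ˢ Finset.Ioc 0 N2 ×ˢ Finset.Ioc 0 N3).filter
        (fun n : ℕ × ℕ × ℕ => k ^ 2 ∣ n.1 * n.2.1 * n.2.2) ⊆ (trip (k ^ 2)).biUnion M := by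
    rintro ⟨n1, n2, n3⟩ hn
    simp only [Finset.mem_filter, Finset.mem_product, Finset.mem_Ioc] at hn
    obtain ⟨⟨⟨hn1p, hn1⟩, ⟨hn2p, hn2⟩, ⟨hn3p, hn3⟩⟩, hdvd⟩ := hn
    set d1 := Nat.gcd (k ^ 2) n1 with hd1
    have hd1dvd : d1 ∣ k ^ 2 := Nat.gcd_dvd_left _ _
    set u := k ^ 2 / d1 with hu
    have hd1pos : 0 < d1 := Nat.gcd_pos_of_pos_left _ (Nat.pos_of_ne_zero hk2)
    have hud1 : d1 * u = k ^ 2 := Nat.mul_div_cancel' hd1dvd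
    have hu0 : u ≠ 0 := by rintro h; rw [h] at hud1; simp at hud1; exact hk2 hud1.symm
    have hun : u ∣ n2 * n3 := by
      have hco : Nat.Coprime u (n1 / d1) :=
        Nat.coprime_div_gcd_div_gcd (m := k ^ 2) (n := n1) hd1pos
      have hdd : d1 * u ∣ d1 * ((n1 / d1) * (n2 * n3)) := by
        rw [← mul_assoc, Nat.mul_div_cancel' (Nat.gcd_dvd_right (k^2) n1), hud1]
        rw [mul_assoc] at hdvd
        exact hdvd
      have := (mul_dvd_mul_iff_left hd1pos.ne').1 hdd
      exact hco.dvd_of_dvd_mul_left this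
    set d2 := Nat.gcd u n2 with hd2
    have hd2pos : 0 < d2 := Nat.gcd_pos_of_pos_left _ (Nat.pos_of_ne_zero hu0)
    have hd2dvd : d2 ∣ u := Nat.gcd_dvd_left _ _
    set d3 := u / d2 with hd3
    have hd23 : d2 * d3 = u := Nat.mul_div_cancel' hd2dvd
    have hd3pos : 0 < d3 := by
      rcases Nat.eq_zero_or_pos d3 with h | h
      · rw [h] at hd23; simp at hd23; exact absurd hd23.symm hu0
      · exact h
    have hd3n3 : d3 ∣ n3 := by
      have hco : Nat.Coprime d3 (n2 / d2) :=
        Nat.coprime_div_gcd_div_gcd (m := u) (n := n2) hd2pos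
      have hdd : d2 * d3 ∣ d2 * ((n2 / d2) * n3) := by
        rw [← mul_assoc, Nat.mul_div_cancel' (Nat.gcd_dvd_right u n2), hd23]
        exact hun
      have := (mul_dvd_mul_iff_left hd2pos.ne').1 hdd
      exact hco.dvd_of_dvd_mul_left this
    refine Finset.mem_biUnion.2 ⟨(d1, d2, d3), ?_, ?_⟩
    · rw [mem_trip hk2]
      simp only
      rw [mul_assoc, hd23, hud1]
    · simp only [hM, Finset.mem_product, Finset.mem_filter, Finset.mem_Ioc]
      exact ⟨⟨⟨hn1p, hn1⟩, Nat.gcd_dvd_right _ _⟩, ⟨⟨hn2p, hn2⟩, Nat.gcd_dvd_right _ _⟩,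
        ⟨⟨hn3p, hn3⟩, hd3n3⟩⟩
  calc _ ≤ ((trip (k ^ 2)).biUnion M).card := Finset.card_le_card hsub
  _ ≤ ∑ d ∈ trip (k ^ 2), (M d).card := Finset.card_biUnion_le
  _ = ∑ d ∈ trip (k ^ 2), (N1 / d.1) * (N2 / d.2.1) * (N3 / d.2.2) := by
      refine Finset.sum_congr rfl fun d _ => ?_
      simp only [hM, Finset.card_product]
      rw [Nat.Ioc_filter_dvd_card_eq_div, Nat.Ioc_filter_dvd_card_eq_div,
        Nat.Ioc_filter_dvd_card_eq_div, mul_assoc]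

lemma key_fac {a1 a2 a3 s : ℕ} (h1 : Squarefree a1) (h2 : Squarefree a2)
    (h3 : Squarefree a3) (hs : a1 * a2 * a3 = s ^ 2) :
    a3 * Nat.gcd a1 a2 ^ 2 = a1 * a2 := by
  have n1 : a1 ≠ 0 := h1.ne_zero
  have n2 : a2 ≠ 0 := h2.ne_zero
  have n3 : a3 ≠ 0 := h3.ne_zero
  have ng : Nat.gcd a1 a2 ≠ 0 := Nat.gcd_ne_zero_left n1
  refine Nat.eq_of_factorization_eq (by positivity) (by positivity) fun p => ?_
  have hfs := congrArg (fun m => m.factorization p) hs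
  simp only [Nat.factorization_mul (by positivity : a1 * a2 ≠ 0) n3,
    Nat.factorization_mul n1 n2, Nat.factorization_pow, Finsupp.coe_add, Finsupp.coe_smul,
    Pi.add_apply, Pi.smul_apply, smul_eq_mul] at hfs
  rw [Nat.factorization_mul n3 (pow_ne_zero 2 ng), Nat.factorization_pow,
    Nat.factorization_mul n1 n2, Nat.factorization_gcd n1 n2]
  simp only [Finsupp.coe_add, Finsupp.coe_smul, Pi.add_apply, Pi.smul_apply, smul_eq_mul,
    Finsupp.inf_apply]
  have e1 := h1.natFactorization_le_one p
  have e2 := h2.natFactorization_le_one p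
  have e3 := h3.natFactorization_le_one p
  omega

noncomputable def inj6 (p : (_ : ℕ) × (ℕ × ℕ × ℕ)) : Fin 6 → ℕ :=
  ![Nat.gcd (sqfA p.2.1) (sqfA p.2.2.1),
    sqfA p.2.1 / Nat.gcd (sqfA p.2.1) (sqfA p.2.2.1),
    sqfA p.2.2.1 / Nat.gcd (sqfA p.2.1) (sqfA p.2.2.1),
    sqfB p.2.1, sqfB p.2.2.1, sqfB p.2.2.2]

lemma inj6_spec {k : ℕ} {d : ℕ × ℕ × ℕ} (hk : k ≠ 0) (hd : d ∈ trip (k ^ 2)) :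
    (∏ i, inj6 ⟨k, d⟩ i = k) ∧
      d.1 = (inj6 ⟨k, d⟩ 0 * inj6 ⟨k, d⟩ 1) * inj6 ⟨k, d⟩ 3 ^ 2 ∧
      d.2.1 = (inj6 ⟨k, d⟩ 0 * inj6 ⟨k, d⟩ 2) * inj6 ⟨k, d⟩ 4 ^ 2 ∧
      d.2.2 = (inj6 ⟨k, d⟩ 1 * inj6 ⟨k, d⟩ 2) * inj6 ⟨k, d⟩ 5 ^ 2 := by
  obtain ⟨d1, d2, d3⟩ := d
  have hk2 : k ^ 2 ≠ 0 := pow_ne_zero 2 hk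
  rw [mem_trip hk2] at hd
  simp only at hd
  have hd1 : d1 ≠ 0 := by rintro rfl; simp at hd; exact hk2 hd.symm
  have hd2 : d2 ≠ 0 := by rintro rfl; simp at hd; exact hk2 hd.symm
  have hd3 : d3 ≠ 0 := by rintro rfl; simp at hd; exact hk2 hd.symm
  obtain ⟨e1, s1⟩ := sqf_spec d1
  obtain ⟨e2, s2⟩ := sqf_spec d2
  obtain ⟨e3, s3⟩ := sqf_spec d3
  obtain ⟨a1ne, b1ne⟩ := sqf_ne_zero hd1
  obtain ⟨a2ne, b2ne⟩ := sqf_ne_zero hd2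
  obtain ⟨a3ne, b3ne⟩ := sqf_ne_zero hd3
  set a1 := sqfA d1; set b1 := sqfB d1
  set a2 := sqfA d2; set b2 := sqfB d2
  set a3 := sqfA d3; set b3 := sqfB d3
  set g := Nat.gcd a1 a2 with hg
  have hgne : g ≠ 0 := Nat.gcd_ne_zero_left a1ne
  have hga1 : g * (a1 / g) = a1 := Nat.mul_div_cancel' (Nat.gcd_dvd_left _ _)
  have hga2 : g * (a2 / g) = a2 := Nat.mul_div_cancel' (Nat.gcd_dvd_right _ _)
  have hBsq : (b1 * b2 * b3) ^ 2 * (a1 * a2 * a3) = k ^ 2 := by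
    rw [← hd, ← e1, ← e2, ← e3]; ring
  have hBk : b1 * b2 * b3 ∣ k := by
    have h : (b1 * b2 * b3) ^ 2 ∣ k ^ 2 := ⟨a1 * a2 * a3, hBsq.symm⟩
    exact (Nat.pow_dvd_pow_iff two_ne_zero).1 h
  have hBne : b1 * b2 * b3 ≠ 0 := by positivity
  have hs : a1 * a2 * a3 = (k / (b1 * b2 * b3)) ^ 2 := by
    have h2 : (b1 * b2 * b3) ^ 2 * (a1 * a2 * a3) =
        (b1 * b2 * b3) ^ 2 * (k / (b1 * b2 * b3)) ^ 2 := by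
      rw [hBsq, ← mul_pow, Nat.mul_div_cancel' hBk]
    exact Nat.eq_of_mul_eq_mul_left (Nat.pos_of_ne_zero (pow_ne_zero 2 hBne)) h2
  have hkey : a3 * g ^ 2 = a1 * a2 := key_fac s1 s2 s3 hs
  have hc12 : (a1 / g) * (a2 / g) = a3 := by
    have h2 : ((a1 / g) * (a2 / g)) * g ^ 2 = a3 * g ^ 2 := by
      calc ((a1 / g) * (a2 / g)) * g ^ 2 = (g * (a1 / g)) * (g * (a2 / g)) := by ring
      _ = a1 * a2 := by rw [hga1, hga2]
      _ = a3 * g ^ 2 := hkey.symm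
    exact Nat.eq_of_mul_eq_mul_right (Nat.pos_of_ne_zero (pow_ne_zero 2 hgne)) h2
  have v0 : inj6 ⟨k, (d1, d2, d3)⟩ 0 = g := rfl
  have v1 : inj6 ⟨k, (d1, d2, d3)⟩ 1 = a1 / g := rfl
  have v2 : inj6 ⟨k, (d1, d2, d3)⟩ 2 = a2 / g := rfl
  have v3 : inj6 ⟨k, (d1, d2, d3)⟩ 3 = b1 := rfl
  have v4 : inj6 ⟨k, (d1, d2, d3)⟩ 4 = b2 := rfl
  have v5 : inj6 ⟨k, (d1, d2, d3)⟩ 5 = b3 := rfl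
  rw [Fin.prod_univ_six, v0, v1, v2, v3, v4, v5]
  refine ⟨?_, ?_, ?_, ?_⟩
  · have hsq2 : (g * (a1 / g) * (a2 / g) * b1 * b2 * b3) ^ 2 = k ^ 2 := by
      have expand : (g * (a1 / g) * (a2 / g) * b1 * b2 * b3) ^ 2 =
          ((g * (a1 / g)) * (g * (a2 / g)) * ((a1 / g) * (a2 / g))) * (b1 * b2 * b3) ^ 2 := by
        ring
      rw [expand, hga1, hga2, hc12, ← hBsq]; ring
    exact Nat.pow_left_injective (by norm_num) hsq2
  · simp only; rw [hga1, ← e1]; ring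
  · simp only; rw [hga2, ← e2]; ring
  · simp only; rw [hc12, ← e3]; ring

noncomputable def phiN : ℕ →* ℝ where
  toFun n := 1 / ((n : ℝ) * Real.sqrt n)
  map_one' := by norm_num
  map_mul' a b := by
    push_cast
    rw [Real.sqrt_mul (by positivity)]
    rw [div_mul_div_comm, one_mul]
    congr 1
    ring

lemma phiN_nonneg (n : ℕ) : 0 ≤ phiN n := by
  unfold phiN; simp only [MonoidHom.coe_mk, OneHom.coe_mk]; positivity

lemma weighted_count_le (L : ℕ) :
    ∑ k ∈ Finset.Ioc 0 L, ∑ _d ∈ trip (k ^ 2), 1 / ((k : ℝ) * Real.sqrt k) ≤ 729 := by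
  classical
  have hrw : ∀ k : ℕ, (1 : ℝ) / ((k : ℝ) * Real.sqrt k) = phiN k := fun k => rfl
  calc ∑ k ∈ Finset.Ioc 0 L, ∑ _d ∈ trip (k ^ 2), 1 / ((k : ℝ) * Real.sqrt k)
      = ∑ p ∈ (Finset.Ioc 0 L).sigma (fun k => trip (k ^ 2)), phiN p.1 := by
        rw [Finset.sum_sigma']
        exact Finset.sum_congr rfl fun p _ => hrw p.1
    _ = ∑ p ∈ (Finset.Ioc 0 L).sigma (fun k => trip (k ^ 2)), ∏ i, phiN (inj6 p i) := by
        refine Finset.sum_congr rfl fun p hp => ?_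
        obtain ⟨k, d⟩ := p
        simp only [Finset.mem_sigma, Finset.mem_Ioc] at hp
        obtain ⟨⟨hk0, hkL⟩, hd⟩ := hp
        have hspec := inj6_spec hk0.ne' hd
        rw [← map_prod phiN _ Finset.univ, hspec.1]
    _ = ∑ w ∈ ((Finset.Ioc 0 L).sigma (fun k => trip (k ^ 2))).image inj6,
          ∏ i, phiN (w i) := by
        rw [Finset.sum_image]
        rintro ⟨k, d⟩ hp ⟨k', d'⟩ hp' heq
        simp only [Finset.mem_coe, Finset.mem_sigma, Finset.mem_Ioc] at hp hp'
        obtain ⟨⟨hk0, _⟩, hd⟩ := hp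
        obtain ⟨⟨hk0', _⟩, hd'⟩ := hp'
        have h1 := inj6_spec hk0.ne' hd
        have h2 := inj6_spec hk0'.ne' hd'
        have hkk : k = k' := by rw [← h1.1, ← h2.1, heq]
        have hdd : d = d' := by
          have c1 : d.1 = d'.1 := by rw [h1.2.1, h2.2.1, heq]
          have c2 : d.2.1 = d'.2.1 := by rw [h1.2.2.1, h2.2.2.1, heq]
          have c3 : d.2.2 = d'.2.2 := by rw [h1.2.2.2, h2.2.2.2, heq]
          exact Prod.ext c1 (Prod.ext c2 c3)
        subst hkk
        rw [hdd]
    _ ≤ ∑ w ∈ Fintype.piFinset (fun _ : Fin 6 => Finset.Ioc 0 L), ∏ i, phiN (w i) := by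
        refine Finset.sum_le_sum_of_subset_of_nonneg ?_
          (fun w _ _ => Finset.prod_nonneg fun i _ => phiN_nonneg _)
        intro w hw
        simp only [Finset.mem_image] at hw
        obtain ⟨⟨k, d⟩, hp, rfl⟩ := hw
        simp only [Finset.mem_sigma, Finset.mem_Ioc] at hp
        obtain ⟨⟨hk0, hkL⟩, hd⟩ := hp
        have hspec := inj6_spec hk0.ne' hd
        rw [Fintype.mem_piFinset]
        intro i
        have hdvd : inj6 ⟨k, d⟩ i ∣ k := by
          rw [← hspec.1]
          exact Finset.dvd_prod_of_mem _ (Finset.mem_univ i)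
        have hpos : 0 < inj6 ⟨k, d⟩ i := by
          rcases Nat.eq_zero_or_pos (inj6 ⟨k, d⟩ i) with h | h
          · exfalso
            have hp1 := hspec.1
            rw [Finset.prod_eq_zero (Finset.mem_univ i) h] at hp1
            exact hk0.ne' hp1.symm
          · exact h
        exact Finset.mem_Ioc.2 ⟨hpos, le_trans (Nat.le_of_dvd hk0 hdvd) hkL⟩
    _ = ∏ _i : Fin 6, ∑ n ∈ Finset.Ioc 0 L, phiN n := (Finset.prod_univ_sum _ _).symm
    _ = (∑ n ∈ Finset.Ioc 0 L, phiN n) ^ 6 := by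
        rw [Finset.prod_const, Finset.card_univ, Fintype.card_fin]
    _ ≤ 3 ^ 6 := by
        have h1 : 0 ≤ ∑ n ∈ Finset.Ioc 0 L, phiN n :=
          Finset.sum_nonneg fun n _ => phiN_nonneg n
        have h2 : ∑ n ∈ Finset.Ioc 0 L, phiN n ≤ 3 := by
          simpa only [hrw] using sum_inv_mul_sqrt_le L
        exact pow_le_pow_left₀ h1 h2 6
    _ = 729 := by norm_num

lemma sum_swap4 {M : Type*} [AddCommMonoid M] (s1 s2 s3 sk : Finset ℕ)
    (f : ℕ → ℕ → ℕ → ℕ → M) :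
    ∑ n1 ∈ s1, ∑ n2 ∈ s2, ∑ n3 ∈ s3, ∑ k ∈ sk, f n1 n2 n3 k
      = ∑ k ∈ sk, ∑ n1 ∈ s1, ∑ n2 ∈ s2, ∑ n3 ∈ s3, f n1 n2 n3 k := by
  calc ∑ n1 ∈ s1, ∑ n2 ∈ s2, ∑ n3 ∈ s3, ∑ k ∈ sk, f n1 n2 n3 k
      = ∑ n1 ∈ s1, ∑ n2 ∈ s2, ∑ k ∈ sk, ∑ n3 ∈ s3, f n1 n2 n3 k :=
        Finset.sum_congr rfl fun n1 _ => Finset.sum_congr rfl fun n2 _ => Finset.sum_comm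
    _ = ∑ n1 ∈ s1, ∑ k ∈ sk, ∑ n2 ∈ s2, ∑ n3 ∈ s3, f n1 n2 n3 k :=
        Finset.sum_congr rfl fun n1 _ => Finset.sum_comm
    _ = ∑ k ∈ sk, ∑ n1 ∈ s1, ∑ n2 ∈ s2, ∑ n3 ∈ s3, f n1 n2 n3 k := Finset.sum_comm

lemma sum_prod3 {M : Type*} [AddCommMonoid M] (s t u : Finset ℕ) (f : ℕ → ℕ → ℕ → M) :
    ∑ x ∈ s ×ˢ t ×ˢ u, f x.1 x.2.1 x.2.2 = ∑ a ∈ s, ∑ b ∈ t, ∑ c ∈ u, f a b c := by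
  rw [Finset.sum_product]
  exact Finset.sum_congr rfl fun a _ => Finset.sum_product _ _ _

lemma norm_moebius_le_one (k : ℕ) : ‖((moebius k : ℤ) : ℂ)‖ ≤ 1 := by
  rw [Complex.norm_intCast]
  have := abs_moebius_le_one (n := k)
  exact_mod_cast this
set_option maxHeartbeats 2000000 in
/-- Reduction of the squarefree condition `μ²(n₁n₂n₃)` via the convolution identity
`μ²(n) = Σ_{k² ∣ n} μ(k)`, truncated at `k ≤ z`, with an absolute implied constant. -/
theorem moebius_squared_truncation :
    ∃ K : ℝ, ∀ g1 g2 g3 : ℕ → ℂ,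
      (∀ m n : ℕ, Nat.Coprime m n → g1 (m * n) = g1 m * g1 n) →
      (∀ m n : ℕ, Nat.Coprime m n → g2 (m * n) = g2 m * g2 n) →
      (∀ m n : ℕ, Nat.Coprime m n → g3 (m * n) = g3 m * g3 n) →
      (∀ n, ‖g1 n‖ ≤ 1) → (∀ n, ‖g2 n‖ ≤ 1) → (∀ n, ‖g3 n‖ ≤ 1) →
      ∀ X1 X2 X3 z : ℝ, ∀ q1 q2 q3 : ℕ, ∀ a1 a2 a3 : ℤ,
        1 < X1 → 1 < X2 → 1 < X3 → 1 ≤ z → z ≤ (X1 * X2 * X3) ^ ((1 : ℝ) / 4) →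
        Int.gcd a1 (q1 : ℤ) = 1 → Int.gcd a2 (q2 : ℤ) = 1 → Int.gcd a3 (q3 : ℤ) = 1 →
        ‖(∑ k ∈ Finset.Icc 1 ⌊z⌋₊, ((ArithmeticFunction.moebius k : ℤ) : ℂ) *
            ∑ n1 ∈ Finset.Icc 1 ⌊X1⌋₊, ∑ n2 ∈ Finset.Icc 1 ⌊X2⌋₊, ∑ n3 ∈ Finset.Icc 1 ⌊X3⌋₊,
              if k ^ 2 ∣ n1 * n2 * n3 ∧
                 (n1 : ℤ) % (q1 : ℤ) = a1 % (q1 : ℤ) ∧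
                 (n2 : ℤ) % (q2 : ℤ) = a2 % (q2 : ℤ) ∧
                 (n3 : ℤ) % (q3 : ℤ) = a3 % (q3 : ℤ)
              then g1 n1 * g2 n2 * g3 n3 else 0) -
          (∑ n1 ∈ Finset.Icc 1 ⌊X1⌋₊, ∑ n2 ∈ Finset.Icc 1 ⌊X2⌋₊, ∑ n3 ∈ Finset.Icc 1 ⌊X3⌋₊,
            if (n1 : ℤ) % (q1 : ℤ) = a1 % (q1 : ℤ) ∧
               (n2 : ℤ) % (q2 : ℤ) = a2 % (q2 : ℤ) ∧
               (n3 : ℤ) % (q3 : ℤ) = a3 % (q3 : ℤ)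
            then ((ArithmeticFunction.moebius (n1 * n2 * n3) : ℤ) : ℂ) ^ 2 *
              (g1 n1 * g2 n2 * g3 n3) else 0)‖
        ≤ K * (X1 * X2 * X3 / z ^ ((1 : ℝ) / 2) * Real.log (X1 * X2 * X3) ^ 3) := by
  refine ⟨729 / Real.log 2 ^ 3, ?_⟩
  intro g1 g2 g3 _hm1 _hm2 _hm3 hg1 hg2 hg3 X1 X2 X3 z q1 q2 q3 a1 a2 a3 hX1 hX2 hX3 hz
    _hz4 _hq1 _hq2 _hq3
  have hX1' : (0:ℝ) ≤ X1 := by linarith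
  have hX2' : (0:ℝ) ≤ X2 := by linarith
  have hX3' : (0:ℝ) ≤ X3 := by linarith
  have hz0 : (0:ℝ) < z := by linarith
  set N1 := ⌊X1⌋₊ with hN1
  set N2 := ⌊X2⌋₊ with hN2
  set N3 := ⌊X3⌋₊ with hN3
  set m := ⌊z⌋₊ with hmdef
  have hN1pos : 1 ≤ N1 := Nat.le_floor (by exact_mod_cast hX1.le)
  have hN2pos : 1 ≤ N2 := Nat.le_floor (by exact_mod_cast hX2.le)
  have hN3pos : 1 ≤ N3 := Nat.le_floor (by exact_mod_cast hX3.le)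
  have hmpos : 1 ≤ m := Nat.le_floor (by exact_mod_cast hz)
  set L := N1 * N2 * N3 with hLdef
  have hLpos : 1 ≤ L := Nat.mul_pos (Nat.mul_pos hN1pos hN2pos) hN3pos
  set A : ℕ → ℂ := fun k =>
    ∑ n1 ∈ Finset.Icc 1 N1, ∑ n2 ∈ Finset.Icc 1 N2, ∑ n3 ∈ Finset.Icc 1 N3,
      if k ^ 2 ∣ n1 * n2 * n3 ∧
          (n1 : ℤ) % (q1 : ℤ) = a1 % (q1 : ℤ) ∧
          (n2 : ℤ) % (q2 : ℤ) = a2 % (q2 : ℤ) ∧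
          (n3 : ℤ) % (q3 : ℤ) = a3 % (q3 : ℤ)
      then g1 n1 * g2 n2 * g3 n3 else 0 with hA
  -- the key abstraction
  have main : ∀ S1 S2 : ℂ,
      S1 = ∑ k ∈ Finset.Ioc 0 m, ((moebius k : ℤ) : ℂ) * A k →
      S2 = ∑ k ∈ Finset.Ioc 0 L, ((moebius k : ℤ) : ℂ) * A k →
      ‖S1 - S2‖ ≤ 729 / Real.log 2 ^ 3 *
        (X1 * X2 * X3 / z ^ ((1 : ℝ) / 2) * Real.log (X1 * X2 * X3) ^ 3) := by
    intro S1 S2 h1 h2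
    subst h1 h2
    have hA0 : ∀ k, L < k → A k = 0 := by
      intro k hk
      rw [hA]
      refine Finset.sum_eq_zero fun n1 hn1 => Finset.sum_eq_zero fun n2 hn2 =>
        Finset.sum_eq_zero fun n3 hn3 => ?_
      rw [if_neg]
      rintro ⟨hdvd, -⟩
      simp only [Finset.mem_Icc] at hn1 hn2 hn3
      have hle : n1 * n2 * n3 ≤ L := Nat.mul_le_mul (Nat.mul_le_mul hn1.2 hn2.2) hn3.2
      have hpos : 0 < n1 * n2 * n3 := Nat.mul_pos (Nat.mul_pos hn1.1 hn2.1) hn3.1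
      have := Nat.le_of_dvd hpos hdvd
      nlinarith [Nat.le_self_pow two_ne_zero k]
    rcases le_or_gt L m with hml | hml
    · -- tail is zero, difference is zero
      have hsplit := Finset.sum_Ioc_consecutive (fun k => ((moebius k : ℤ) : ℂ) * A k)
        (Nat.zero_le L) hml
      have htail : ∑ k ∈ Finset.Ioc L m, ((moebius k : ℤ) : ℂ) * A k = 0 :=
        Finset.sum_eq_zero fun k hk => by
          rw [hA0 k (Finset.mem_Ioc.1 hk).1, mul_zero]
      rw [← hsplit, htail, add_zero, sub_self, norm_zero]
      have hXprod : (1:ℝ) ≤ X1 * X2 * X3 := by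
        nlinarith [mul_nonneg (sub_nonneg.2 hX1.le) (sub_nonneg.2 hX2.le),
          mul_pos (lt_trans one_pos hX1) (lt_trans one_pos hX2)]
      have hlog : 0 ≤ Real.log (X1 * X2 * X3) := Real.log_nonneg hXprod
      have hzr : (0:ℝ) ≤ z ^ ((1:ℝ)/2) := Real.rpow_nonneg hz0.le _
      positivity
    · -- main case
      have hsplit := Finset.sum_Ioc_consecutive (fun k => ((moebius k : ℤ) : ℂ) * A k)
        (Nat.zero_le m) hml.le
      have hdiff : (∑ k ∈ Finset.Ioc 0 m, ((moebius k : ℤ) : ℂ) * A k) -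
          (∑ k ∈ Finset.Ioc 0 L, ((moebius k : ℤ) : ℂ) * A k) =
          -(∑ k ∈ Finset.Ioc m L, ((moebius k : ℤ) : ℂ) * A k) := by
        rw [← hsplit]; ring
      rw [hdiff, norm_neg]
      -- per-k bound
      have hkbound : ∀ k ∈ Finset.Ioc m L, ‖((moebius k : ℤ) : ℂ) * A k‖ ≤
          ∑ d ∈ trip (k ^ 2),
            (X1 * X2 * X3 / Real.sqrt z) * (1 / ((k:ℝ) * Real.sqrt k)) := by
        intro k hk
        obtain ⟨hmk, hkL⟩ := Finset.mem_Ioc.1 hk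
        have hk0 : k ≠ 0 := by omega
        have hzk : z < k := by
          have h1 := Nat.lt_floor_add_one z
          have h2 : (m:ℝ) + 1 ≤ (k:ℝ) := by exact_mod_cast hmk
          linarith
      -- step 1 : remove the moebius factor
        have step1 : ‖((moebius k : ℤ) : ℂ) * A k‖ ≤ ‖A k‖ := by
          rw [norm_mul]
          exact mul_le_of_le_one_left (norm_nonneg _) (norm_moebius_le_one k)
      -- step 2 : bound the norm by the count
        have step2 : ‖A k‖ ≤
            (((Finset.Ioc 0 N1 ×ˢ Finset.Ioc 0 N2 ×ˢ Finset.Ioc 0 N3).filter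
              (fun n : ℕ × ℕ × ℕ => k ^ 2 ∣ n.1 * n.2.1 * n.2.2)).card : ℝ) := by
          rw [hA]
          simp only
          rw [← sum_prod3 (Finset.Icc 1 N1) (Finset.Icc 1 N2) (Finset.Icc 1 N3)]
          have hIcc : ∀ N : ℕ, Finset.Icc 1 N = Finset.Ioc 0 N := fun N => rfl
          rw [hIcc N1, hIcc N2, hIcc N3]
          calc ‖∑ x ∈ Finset.Ioc 0 N1 ×ˢ Finset.Ioc 0 N2 ×ˢ Finset.Ioc 0 N3,
              (if k ^ 2 ∣ x.1 * x.2.1 * x.2.2 ∧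
                  (x.1 : ℤ) % (q1 : ℤ) = a1 % (q1 : ℤ) ∧
                  (x.2.1 : ℤ) % (q2 : ℤ) = a2 % (q2 : ℤ) ∧
                  (x.2.2 : ℤ) % (q3 : ℤ) = a3 % (q3 : ℤ)
                then g1 x.1 * g2 x.2.1 * g3 x.2.2 else 0)‖
              ≤ ∑ x ∈ Finset.Ioc 0 N1 ×ˢ Finset.Ioc 0 N2 ×ˢ Finset.Ioc 0 N3,
                ‖(if k ^ 2 ∣ x.1 * x.2.1 * x.2.2 ∧
                  (x.1 : ℤ) % (q1 : ℤ) = a1 % (q1 : ℤ) ∧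
                  (x.2.1 : ℤ) % (q2 : ℤ) = a2 % (q2 : ℤ) ∧
                  (x.2.2 : ℤ) % (q3 : ℤ) = a3 % (q3 : ℤ)
                then g1 x.1 * g2 x.2.1 * g3 x.2.2 else 0)‖ := norm_sum_le _ _
            _ ≤ ∑ x ∈ Finset.Ioc 0 N1 ×ˢ Finset.Ioc 0 N2 ×ˢ Finset.Ioc 0 N3,
                (if k ^ 2 ∣ x.1 * x.2.1 * x.2.2 then (1:ℝ) else 0) := by
                refine Finset.sum_le_sum fun x _ => ?_
                split_ifs with h1 h2 h2
                · rw [norm_mul, norm_mul]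
                  have h12 := mul_le_mul (hg1 x.1) (hg2 x.2.1) (norm_nonneg (g2 x.2.1))
                    zero_le_one
                  have h123 := mul_le_mul h12 (hg3 x.2.2) (norm_nonneg (g3 x.2.2))
                    (by norm_num : (0:ℝ) ≤ 1 * 1)
                  simpa using h123
                · exact absurd h1.1 h2
                · simp
                · simp
            _ = _ := by rw [Finset.sum_boole]
      -- step 3 : count bound
        have step3 : (((Finset.Ioc 0 N1 ×ˢ Finset.Ioc 0 N2 ×ˢ Finset.Ioc 0 N3).filter
              (fun n : ℕ × ℕ × ℕ => k ^ 2 ∣ n.1 * n.2.1 * n.2.2)).card : ℝ) ≤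
            ∑ d ∈ trip (k ^ 2),
              (X1 * X2 * X3 / Real.sqrt z) * (1 / ((k:ℝ) * Real.sqrt k)) := by
          have hcount := count_le_sum k N1 N2 N3 hk0
          have hcast : (((Finset.Ioc 0 N1 ×ˢ Finset.Ioc 0 N2 ×ˢ Finset.Ioc 0 N3).filter
              (fun n : ℕ × ℕ × ℕ => k ^ 2 ∣ n.1 * n.2.1 * n.2.2)).card : ℝ) ≤
              ∑ d ∈ trip (k ^ 2), ((N1 / d.1 : ℕ):ℝ) * ((N2 / d.2.1 : ℕ):ℝ) *
                ((N3 / d.2.2 : ℕ):ℝ) := by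
            rw [show (∑ d ∈ trip (k ^ 2), ((N1 / d.1 : ℕ):ℝ) * ((N2 / d.2.1 : ℕ):ℝ) *
                ((N3 / d.2.2 : ℕ):ℝ)) =
                ((∑ d ∈ trip (k ^ 2), (N1 / d.1) * (N2 / d.2.1) * (N3 / d.2.2) : ℕ) : ℝ) by
              push_cast; rfl]
            exact_mod_cast hcount
          refine hcast.trans (Finset.sum_le_sum fun d hd => ?_)
          have hd' := (mem_trip (pow_ne_zero 2 hk0) (d := d)).1 hd
          have hd1 : d.1 ≠ 0 := by
            rintro h; rw [h] at hd'; simp at hd'; exact (pow_ne_zero 2 hk0) hd'.symm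
          have hd2 : d.2.1 ≠ 0 := by
            rintro h; rw [h] at hd'; simp at hd'; exact (pow_ne_zero 2 hk0) hd'.symm
          have hd3 : d.2.2 ≠ 0 := by
            rintro h; rw [h] at hd'; simp at hd'; exact (pow_ne_zero 2 hk0) hd'.symm
          have hd1p : (0:ℝ) < d.1 := by exact_mod_cast Nat.pos_of_ne_zero hd1
          have hd2p : (0:ℝ) < d.2.1 := by exact_mod_cast Nat.pos_of_ne_zero hd2
          have hd3p : (0:ℝ) < d.2.2 := by exact_mod_cast Nat.pos_of_ne_zero hd3
          have b1 : ((N1 / d.1 : ℕ):ℝ) ≤ X1 / d.1 :=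
            Nat.cast_div_le.trans (by gcongr; exact Nat.floor_le hX1')
          have b2 : ((N2 / d.2.1 : ℕ):ℝ) ≤ X2 / d.2.1 :=
            Nat.cast_div_le.trans (by gcongr; exact Nat.floor_le hX2')
          have b3 : ((N3 / d.2.2 : ℕ):ℝ) ≤ X3 / d.2.2 :=
            Nat.cast_div_le.trans (by gcongr; exact Nat.floor_le hX3')
          calc ((N1 / d.1 : ℕ):ℝ) * ((N2 / d.2.1 : ℕ):ℝ) * ((N3 / d.2.2 : ℕ):ℝ)
              ≤ (X1 / d.1) * (X2 / d.2.1) * (X3 / d.2.2) := by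
                apply mul_le_mul (mul_le_mul b1 b2 (by positivity) (by positivity)) b3
                  (by positivity)
                positivity
            _ = (X1 * X2 * X3) / ((k:ℝ)^2) := by
                have hcast : ((d.1 : ℝ)) * (d.2.1:ℝ) * (d.2.2:ℝ) = ((k:ℝ)^2) := by
                  exact_mod_cast hd'
                rw [div_mul_div_comm, div_mul_div_comm, hcast]
            _ ≤ (X1 * X2 * X3 / Real.sqrt z) * (1 / ((k:ℝ) * Real.sqrt k)) := by
                have hkr : (0:ℝ) < k := by exact_mod_cast Nat.pos_of_ne_zero hk0
                have hsz : Real.sqrt z ≤ Real.sqrt k := Real.sqrt_le_sqrt hzk.le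
                have hsz0 : (0:ℝ) < Real.sqrt z := Real.sqrt_pos.2 hz0
                have hsk0 : (0:ℝ) < Real.sqrt k := Real.sqrt_pos.2 hkr
                rw [div_mul_div_comm, mul_one]
                apply div_le_div_of_nonneg_left (by positivity) (by positivity)
                calc Real.sqrt z * ((k:ℝ) * Real.sqrt k)
                    ≤ Real.sqrt k * ((k:ℝ) * Real.sqrt k) := by gcongr
                  _ = (k:ℝ) * (Real.sqrt k * Real.sqrt k) := by ring
                  _ = (k:ℝ) * (k:ℝ) := by rw [Real.mul_self_sqrt hkr.le]
                  _ = (k:ℝ)^2 := by ring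
        exact step1.trans (step2.trans step3)
      -- sum over k
      calc ‖∑ k ∈ Finset.Ioc m L, ((moebius k : ℤ) : ℂ) * A k‖
          ≤ ∑ k ∈ Finset.Ioc m L, ‖((moebius k : ℤ) : ℂ) * A k‖ := norm_sum_le _ _
        _ ≤ ∑ k ∈ Finset.Ioc m L, ∑ d ∈ trip (k ^ 2),
            (X1 * X2 * X3 / Real.sqrt z) * (1 / ((k:ℝ) * Real.sqrt k)) :=
            Finset.sum_le_sum hkbound
        _ = (X1 * X2 * X3 / Real.sqrt z) * ∑ k ∈ Finset.Ioc m L, ∑ _d ∈ trip (k ^ 2),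
            (1 / ((k:ℝ) * Real.sqrt k)) := by
            rw [Finset.mul_sum]
            exact Finset.sum_congr rfl fun k _ => by rw [Finset.mul_sum]
        _ ≤ (X1 * X2 * X3 / Real.sqrt z) * 729 := by
            have hsubset : Finset.Ioc m L ⊆ Finset.Ioc 0 L := by
              intro x hx; simp only [Finset.mem_Ioc] at hx ⊢; omega
            have hext : ∑ k ∈ Finset.Ioc m L, ∑ _d ∈ trip (k ^ 2),
                (1 / ((k:ℝ) * Real.sqrt k)) ≤ ∑ k ∈ Finset.Ioc 0 L, ∑ _d ∈ trip (k ^ 2),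
                (1 / ((k:ℝ) * Real.sqrt k)) := by
              refine Finset.sum_le_sum_of_subset_of_nonneg hsubset fun k _ _ => ?_
              exact Finset.sum_nonneg fun d _ => by positivity
            have h729 := weighted_count_le L
            have hXz : (0:ℝ) ≤ X1 * X2 * X3 / Real.sqrt z := by positivity
            exact mul_le_mul_of_nonneg_left (hext.trans h729) hXz
        _ ≤ 729 / Real.log 2 ^ 3 *
            (X1 * X2 * X3 / z ^ ((1 : ℝ) / 2) * Real.log (X1 * X2 * X3) ^ 3) := by
            rw [← Real.sqrt_eq_rpow]
            have hL2 : 2 ≤ L := Nat.succ_le_of_lt (lt_of_le_of_lt hmpos hml)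
            have hX123 : (2:ℝ) ≤ X1 * X2 * X3 := by
              calc (2:ℝ) ≤ (L:ℝ) := by exact_mod_cast hL2
                _ = (N1:ℝ) * (N2:ℝ) * (N3:ℝ) := by rw [hLdef]; push_cast; ring
                _ ≤ X1 * X2 * X3 := by
                    have f1 := Nat.floor_le hX1'
                    have f2 := Nat.floor_le hX2'
                    have f3 := Nat.floor_le hX3'
                    have p1 : (0:ℝ) ≤ (N1:ℝ) := by positivity
                    have p2 : (0:ℝ) ≤ (N2:ℝ) := by positivity
                    have p3 : (0:ℝ) ≤ (N3:ℝ) := by positivity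
                    have h12 : (N1:ℝ) * (N2:ℝ) ≤ X1 * X2 := mul_le_mul f1 f2 p2 hX1'
                    exact mul_le_mul h12 f3 p3 (by positivity)
            have hlog2 : (0:ℝ) < Real.log 2 := Real.log_pos (by norm_num)
            have hlog : Real.log 2 ≤ Real.log (X1 * X2 * X3) :=
              Real.log_le_log (by norm_num) hX123
            have hcube : Real.log 2 ^ 3 ≤ Real.log (X1 * X2 * X3) ^ 3 :=
              pow_le_pow_left₀ hlog2.le hlog 3
            have hY : (0:ℝ) ≤ X1 * X2 * X3 / Real.sqrt z := by positivity
            have hone : (1:ℝ) ≤ Real.log (X1 * X2 * X3) ^ 3 / Real.log 2 ^ 3 :=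
              (one_le_div (by positivity)).2 hcube
            calc X1 * X2 * X3 / Real.sqrt z * 729
                ≤ X1 * X2 * X3 / Real.sqrt z * 729 *
                  (Real.log (X1 * X2 * X3) ^ 3 / Real.log 2 ^ 3) :=
                  le_mul_of_one_le_right (by positivity) hone
              _ = 729 / Real.log 2 ^ 3 *
                  (X1 * X2 * X3 / Real.sqrt z * Real.log (X1 * X2 * X3) ^ 3) := by ring
  refine main _ _ rfl ?_
  -- prove the identity for the second sum
  rw [hA]
  have hpoint : ∀ n1 ∈ Finset.Icc 1 N1, ∀ n2 ∈ Finset.Icc 1 N2, ∀ n3 ∈ Finset.Icc 1 N3,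
      (if (n1 : ℤ) % (q1 : ℤ) = a1 % (q1 : ℤ) ∧
          (n2 : ℤ) % (q2 : ℤ) = a2 % (q2 : ℤ) ∧
          (n3 : ℤ) % (q3 : ℤ) = a3 % (q3 : ℤ)
        then ((moebius (n1 * n2 * n3) : ℤ) : ℂ) ^ 2 * (g1 n1 * g2 n2 * g3 n3) else 0) =
      ∑ k ∈ Finset.Ioc 0 L, ((moebius k : ℤ) : ℂ) *
        (if k ^ 2 ∣ n1 * n2 * n3 ∧
            (n1 : ℤ) % (q1 : ℤ) = a1 % (q1 : ℤ) ∧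
            (n2 : ℤ) % (q2 : ℤ) = a2 % (q2 : ℤ) ∧
            (n3 : ℤ) % (q3 : ℤ) = a3 % (q3 : ℤ)
          then g1 n1 * g2 n2 * g3 n3 else 0) := by
    intro n1 hn1 n2 hn2 n3 hn3
    simp only [Finset.mem_Icc] at hn1 hn2 hn3
    have hne : n1 * n2 * n3 ≠ 0 :=
      (Nat.mul_pos (Nat.mul_pos hn1.1 hn2.1) hn3.1).ne'
    have hle : n1 * n2 * n3 ≤ L := Nat.mul_le_mul (Nat.mul_le_mul hn1.2 hn2.2) hn3.2
    by_cases hc : (n1 : ℤ) % (q1 : ℤ) = a1 % (q1 : ℤ) ∧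
        (n2 : ℤ) % (q2 : ℤ) = a2 % (q2 : ℤ) ∧ (n3 : ℤ) % (q3 : ℤ) = a3 % (q3 : ℤ)
    · rw [if_pos hc, moebius_sq_eq_sum hne hle, Finset.sum_mul]
      refine Finset.sum_congr rfl fun k _ => ?_
      by_cases hdv : k ^ 2 ∣ n1 * n2 * n3
      · rw [if_pos hdv, if_pos ⟨hdv, hc⟩]
      · rw [if_neg hdv, if_neg (fun h => hdv h.1), zero_mul, mul_zero]
    · rw [if_neg hc]
      symm
      refine Finset.sum_eq_zero fun k _ => ?_
      rw [if_neg (fun h => hc h.2), mul_zero]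
  calc (∑ n1 ∈ Finset.Icc 1 N1, ∑ n2 ∈ Finset.Icc 1 N2, ∑ n3 ∈ Finset.Icc 1 N3,
        if (n1 : ℤ) % (q1 : ℤ) = a1 % (q1 : ℤ) ∧
           (n2 : ℤ) % (q2 : ℤ) = a2 % (q2 : ℤ) ∧
           (n3 : ℤ) % (q3 : ℤ) = a3 % (q3 : ℤ)
        then ((moebius (n1 * n2 * n3) : ℤ) : ℂ) ^ 2 * (g1 n1 * g2 n2 * g3 n3) else 0)
      = ∑ n1 ∈ Finset.Icc 1 N1, ∑ n2 ∈ Finset.Icc 1 N2, ∑ n3 ∈ Finset.Icc 1 N3,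
        ∑ k ∈ Finset.Ioc 0 L, ((moebius k : ℤ) : ℂ) *
          (if k ^ 2 ∣ n1 * n2 * n3 ∧
              (n1 : ℤ) % (q1 : ℤ) = a1 % (q1 : ℤ) ∧
              (n2 : ℤ) % (q2 : ℤ) = a2 % (q2 : ℤ) ∧
              (n3 : ℤ) % (q3 : ℤ) = a3 % (q3 : ℤ)
            then g1 n1 * g2 n2 * g3 n3 else 0) := by
        refine Finset.sum_congr rfl fun n1 hn1 => Finset.sum_congr rfl fun n2 hn2 =>
          Finset.sum_congr rfl fun n3 hn3 => ?_
        exact hpoint n1 hn1 n2 hn2 n3 hn3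
    _ = _ := by
        rw [sum_swap4]
        simp only [← Finset.mul_sum]
end

section
/- For every ε > 0 there is a constant K(ε) such that for all k ∈ ℕ: Σ_{n ∈ ℕ : k² | n and every prime dividing n divides k} n^{−1/2−ε} ≤ K(ε)·k^{−1−ε}. -/
open Nat Finset Real

/-- The natural equivalence between multiples of `k²` whose prime factors divide `k`
and `k.primeFactors`-factored numbers, given by `n ↦ n / k²`. -/
def smoothMultiplesEquiv (k : ℕ) (hk : 0 < k) :
    {n : ℕ // 0 < n ∧ k ^ 2 ∣ n ∧ ∀ p : ℕ, p.Prime → p ∣ n → p ∣ k} ≃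
      Nat.factoredNumbers k.primeFactors where
  toFun n := ⟨(n : ℕ) / k ^ 2, by
    obtain ⟨hn, hdvd, hp⟩ := n.2
    have hm0 : (n : ℕ) / k ^ 2 ≠ 0 :=
      Nat.div_ne_zero_iff.mpr ⟨by positivity, Nat.le_of_dvd hn hdvd⟩
    refine ⟨hm0, fun p hpm ↦ ?_⟩
    rw [Nat.mem_primeFactorsList hm0] at hpm
    exact Nat.mem_primeFactors.mpr ⟨hpm.1, hp p hpm.1
      (hpm.2.trans (Nat.div_dvd_of_dvd hdvd)), hk.ne'⟩⟩
  invFun m := ⟨k ^ 2 * (m : ℕ), by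
    obtain ⟨hm, hfac⟩ := m.2
    refine ⟨by positivity, Dvd.intro _ rfl, fun p hp hpd ↦ ?_⟩
    rcases (Nat.Prime.dvd_mul hp).mp hpd with h | h
    · exact hp.dvd_of_dvd_pow h
    · exact (Nat.mem_primeFactors.mp
        (hfac p ((Nat.mem_primeFactorsList hm).mpr ⟨hp, h⟩))).2.1⟩
  left_inv n := Subtype.ext (Nat.mul_div_cancel' n.2.2.1)
  right_inv m := Subtype.ext (Nat.mul_div_cancel_left _ (by positivity))

lemma prod_primeFactors_bound (ε : ℝ) (hε : 0 < ε) :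
    ∃ C : ℝ, 0 ≤ C ∧ ∀ k : ℕ, 0 < k →
      ∏ p ∈ k.primeFactors, (1 - (p : ℝ) ^ (-(1 : ℝ) / 2 - ε))⁻¹ ≤ C * (k : ℝ) ^ ε := by
  set σ : ℝ := -(1 : ℝ) / 2 - ε with hσdef
  have hσ : σ < 0 := by rw [hσdef]; linarith
  -- basic facts about factors
  have hfac : ∀ p : ℕ, p.Prime → (0 : ℝ) < 1 - (p : ℝ) ^ σ := by
    intro p hp
    have : (p : ℝ) ^ σ < 1 :=
      Real.rpow_lt_one_of_one_lt_of_neg (by exact_mod_cast hp.one_lt) hσ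
    linarith
  have hfac1 : ∀ p : ℕ, p.Prime → (1 : ℝ) ≤ (1 - (p : ℝ) ^ σ)⁻¹ := by
    intro p hp
    rw [le_inv_comm₀ one_pos (hfac p hp)]
    have : (0 : ℝ) ≤ (p : ℝ) ^ σ := Real.rpow_nonneg (by positivity) _
    linarith
  set B : ℕ := max 4 ⌈(2 : ℝ) ^ (1 / ε)⌉₊ with hBdef
  set c : ℝ := (1 - (2 : ℝ) ^ σ)⁻¹ with hcdef
  have hc1 : (1 : ℝ) ≤ c := hfac1 2 Nat.prime_two
  refine ⟨c ^ B, by positivity, fun k hk ↦ ?_⟩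
  rw [← Finset.prod_filter_mul_prod_filter_not k.primeFactors (· < B)]
  have hbound1 : ∏ p ∈ k.primeFactors.filter (· < B), (1 - (p : ℝ) ^ σ)⁻¹ ≤ c ^ B := by
    calc ∏ p ∈ k.primeFactors.filter (· < B), (1 - (p : ℝ) ^ σ)⁻¹
        ≤ ∏ _p ∈ k.primeFactors.filter (· < B), c := by
          refine Finset.prod_le_prod (fun p hp ↦ ?_) (fun p hp ↦ ?_)
          · exact le_trans zero_le_one
              (hfac1 p (Nat.prime_of_mem_primeFactors (Finset.mem_filter.mp hp).1))
          · have hp' := Nat.prime_of_mem_primeFactors (Finset.mem_filter.mp hp).1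
            rw [hcdef]
            have h2p : (2 : ℝ) ≤ (p : ℝ) := by exact_mod_cast hp'.two_le
            have hle := Real.rpow_le_rpow_of_nonpos two_pos h2p hσ.le
            exact inv_anti₀ (hfac 2 Nat.prime_two) (by linarith)
    _ ≤ c ^ B := by
          rw [Finset.prod_const]
          refine pow_le_pow_right₀ hc1 ?_
          calc (k.primeFactors.filter (· < B)).card
              ≤ (Finset.range B).card := Finset.card_le_card (fun p hp ↦ by
                simp only [Finset.mem_range]
                exact (Finset.mem_filter.mp hp).2)
            _ = B := Finset.card_range B
  have hbound2 : ∏ p ∈ k.primeFactors.filter (fun p ↦ ¬ p < B), (1 - (p : ℝ) ^ σ)⁻¹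
      ≤ (k : ℝ) ^ ε := by
    calc ∏ p ∈ k.primeFactors.filter (fun p ↦ ¬ p < B), (1 - (p : ℝ) ^ σ)⁻¹
        ≤ ∏ p ∈ k.primeFactors.filter (fun p ↦ ¬ p < B), (p : ℝ) ^ ε := by
          refine Finset.prod_le_prod (fun p hp ↦ ?_) (fun p hp ↦ ?_)
          · exact le_trans zero_le_one
              (hfac1 p (Nat.prime_of_mem_primeFactors (Finset.mem_filter.mp hp).1))
          · have hp' := Nat.prime_of_mem_primeFactors (Finset.mem_filter.mp hp).1
            have hpB : B ≤ p := not_lt.mp (Finset.mem_filter.mp hp).2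
            have hp4 : (4 : ℝ) ≤ (p : ℝ) := by
              exact_mod_cast le_trans (le_max_left 4 _) hpB
            have hp0 : (0 : ℝ) < p := by linarith
            -- p ^ (-ε) ≤ 1/2
            have hpe : (p : ℝ) ^ (-ε) ≤ 1 / 2 := by
              have h1 : (2 : ℝ) ^ (1 / ε) ≤ (p : ℝ) := by
                calc (2 : ℝ) ^ (1 / ε) ≤ (⌈(2 : ℝ) ^ (1 / ε)⌉₊ : ℝ) := Nat.le_ceil _
                  _ ≤ (B : ℝ) := by exact_mod_cast le_max_right 4 _
                  _ ≤ (p : ℝ) := by exact_mod_cast hpB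
              have h2 : (2 : ℝ) ≤ (p : ℝ) ^ ε := by
                have := Real.rpow_le_rpow (by positivity) h1 hε.le
                rwa [← Real.rpow_mul (by norm_num : (0:ℝ) ≤ 2),
                  one_div_mul_cancel hε.ne', Real.rpow_one] at this
              rw [Real.rpow_neg hp0.le]
              rw [inv_le_comm₀ (by positivity) (by norm_num)]
              linarith
            -- p ^ σ ≤ 1/2
            have hps : (p : ℝ) ^ σ ≤ 1 / 2 := by
              have h1 : (p : ℝ) ^ σ ≤ (p : ℝ) ^ (-(1:ℝ)/2) :=
                Real.rpow_le_rpow_of_exponent_le (by linarith) (by rw [hσdef]; linarith)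
              have h2 : (p : ℝ) ^ (-(1:ℝ)/2) ≤ 1 / 2 := by
                have h4 : (2 : ℝ) ≤ (p : ℝ) ^ ((1:ℝ)/2) := by
                  have := Real.rpow_le_rpow (by norm_num : (0:ℝ) ≤ 4) hp4
                    (by norm_num : (0:ℝ) ≤ 1/2)
                  calc (2 : ℝ) = (4 : ℝ) ^ ((1:ℝ)/2) := by
                        rw [show (4:ℝ) = 2 ^ (2:ℕ) by norm_num, ← Real.rpow_natCast 2 2,
                          ← Real.rpow_mul (by norm_num)]
                        norm_num
                    _ ≤ (p : ℝ) ^ ((1:ℝ)/2) := this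
                rw [show -(1:ℝ)/2 = -((1:ℝ)/2) by ring, Real.rpow_neg hp0.le]
                rw [inv_le_comm₀ (by positivity) (by norm_num)]
                linarith
              linarith
            have key : (p : ℝ) ^ (-ε) ≤ 1 - (p : ℝ) ^ σ := by linarith
            calc (1 - (p : ℝ) ^ σ)⁻¹ ≤ ((p : ℝ) ^ (-ε))⁻¹ :=
                  inv_anti₀ (by positivity) key
              _ = (p : ℝ) ^ ε := by rw [Real.rpow_neg hp0.le, inv_inv]
      _ = (∏ p ∈ k.primeFactors.filter (fun p ↦ ¬ p < B), (p : ℝ)) ^ ε := by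
          rw [← Real.finset_prod_rpow _ _ (fun p _ ↦ by positivity)]
      _ ≤ (k : ℝ) ^ ε := by
          refine Real.rpow_le_rpow (Finset.prod_nonneg fun p _ ↦ by positivity) ?_ hε.le
          have h1 : (∏ p ∈ k.primeFactors.filter (fun p ↦ ¬ p < B), p)
              ≤ ∏ p ∈ k.primeFactors, p :=
            Finset.prod_le_prod_of_subset_of_one_le' (Finset.filter_subset _ _)
              fun p hp _ ↦ (Nat.prime_of_mem_primeFactors hp).one_lt.le
          have h2 : (∏ p ∈ k.primeFactors, p) ≤ k :=
            Nat.le_of_dvd hk (Nat.prod_primeFactors_dvd k)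
          calc ∏ p ∈ k.primeFactors.filter (fun p ↦ ¬ p < B), (p : ℝ)
              = ((∏ p ∈ k.primeFactors.filter (fun p ↦ ¬ p < B), p : ℕ) : ℝ) := by
                push_cast; rfl
            _ ≤ (k : ℝ) := by exact_mod_cast h1.trans h2
  have h2 : (0 : ℝ) ≤ ∏ p ∈ k.primeFactors.filter (fun p ↦ ¬ p < B), (1 - (p : ℝ) ^ σ)⁻¹ :=
    Finset.prod_nonneg fun p hp ↦ le_trans zero_le_one
      (hfac1 p (Nat.prime_of_mem_primeFactors (Finset.mem_filter.mp hp).1))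
  have h1 : (0 : ℝ) ≤ ∏ p ∈ k.primeFactors.filter (· < B), (1 - (p : ℝ) ^ σ)⁻¹ :=
    Finset.prod_nonneg fun p hp ↦ le_trans zero_le_one
      (hfac1 p (Nat.prime_of_mem_primeFactors (Finset.mem_filter.mp hp).1))
  exact mul_le_mul hbound1 hbound2 h2 (by positivity)

/-- For every `ε > 0` there is a constant `K(ε)` with
`Σ_{n : k² ∣ n, rad(n) ∣ k} n^{-1/2-ε} ≤ K(ε) k^{-1-ε}` for all `k ≥ 1`. -/
theorem sum_smooth_multiples_bound (ε : ℝ) (hε : 0 < ε) :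
    ∃ K : ℝ, ∀ k : ℕ, 0 < k →
      (∑' n : {n : ℕ // 0 < n ∧ k ^ 2 ∣ n ∧ ∀ p : ℕ, p.Prime → p ∣ n → p ∣ k},
          ((n : ℕ) : ℝ) ^ (-(1 : ℝ) / 2 - ε))
        ≤ K * (k : ℝ) ^ (-(1 : ℝ) - ε) := by
  set σ : ℝ := -(1 : ℝ) / 2 - ε with hσdef
  have hσ : σ < 0 := by rw [hσdef]; linarith
  obtain ⟨C, hC0, hC⟩ := prod_primeFactors_bound ε hε
  refine ⟨C, fun k hk ↦ ?_⟩
  have hk0 : (0 : ℝ) < k := by exact_mod_cast hk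
  -- the multiplicative function n ↦ n ^ σ
  let f : ℕ →* ℝ :=
    { toFun := fun n ↦ (n : ℝ) ^ σ
      map_one' := by simp
      map_mul' := fun m n ↦ by
        push_cast
        exact Real.mul_rpow (by positivity) (by positivity) }
  have hf : ∀ {p : ℕ}, p.Prime → ‖f p‖ < 1 := by
    intro p hp
    have h0 : (0 : ℝ) ≤ (p : ℝ) ^ σ := Real.rpow_nonneg (by positivity) _
    have hfp : f p = (p : ℝ) ^ σ := rfl
    rw [Real.norm_eq_abs, hfp, abs_of_nonneg h0]
    exact Real.rpow_lt_one_of_one_lt_of_neg (by exact_mod_cast hp.one_lt) hσ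
  obtain ⟨-, hsum⟩ :=
    EulerProduct.summable_and_hasSum_factoredNumbers_prod_filter_prime_geometric
      (F := ℝ) (f := f) hf k.primeFactors
  have hfilter : k.primeFactors.filter Nat.Prime = k.primeFactors :=
    Finset.filter_eq_self.mpr fun p hp ↦ Nat.prime_of_mem_primeFactors hp
  have htsum : (∑' m : Nat.factoredNumbers k.primeFactors, ((m : ℕ) : ℝ) ^ σ)
      = ∏ p ∈ k.primeFactors, (1 - (p : ℝ) ^ σ)⁻¹ := by
    have := hsum.tsum_eq
    rw [hfilter] at this
    exact this
  -- transport the sum via the equivalence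
  have hkey : (∑' n : {n : ℕ // 0 < n ∧ k ^ 2 ∣ n ∧ ∀ p : ℕ, p.Prime → p ∣ n → p ∣ k},
      ((n : ℕ) : ℝ) ^ σ)
      = (k : ℝ) ^ (-(1 : ℝ) - 2 * ε) *
        ∑' m : Nat.factoredNumbers k.primeFactors, ((m : ℕ) : ℝ) ^ σ := by
    rw [← tsum_mul_left, ← (smoothMultiplesEquiv k hk).tsum_eq
      (fun m : Nat.factoredNumbers k.primeFactors ↦
        (k : ℝ) ^ (-(1 : ℝ) - 2 * ε) * ((m : ℕ) : ℝ) ^ σ)]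
    refine tsum_congr fun n ↦ ?_
    have hdvd := n.2.2.1
    have heq : ((n : ℕ) : ℝ) = (k : ℝ) ^ (2 : ℕ) * (((n : ℕ) / k ^ 2 : ℕ) : ℝ) := by
      rw_mod_cast [Nat.mul_div_cancel' hdvd]
    have hcoe : ((smoothMultiplesEquiv k hk n : ℕ) : ℝ) = (((n : ℕ) / k ^ 2 : ℕ) : ℝ) := rfl
    rw [hcoe, heq, Real.mul_rpow (by positivity) (by positivity),
      ← Real.rpow_natCast (k : ℝ) 2, ← Real.rpow_mul hk0.le]
    norm_num
    left
    rw [hσdef]; ring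
  rw [hkey, htsum]
  calc (k : ℝ) ^ (-(1 : ℝ) - 2 * ε) * ∏ p ∈ k.primeFactors, (1 - (p : ℝ) ^ σ)⁻¹
      ≤ (k : ℝ) ^ (-(1 : ℝ) - 2 * ε) * (C * (k : ℝ) ^ ε) :=
        mul_le_mul_of_nonneg_left (hC k hk) (Real.rpow_nonneg hk0.le _)
    _ = C * (k : ℝ) ^ (-(1 : ℝ) - ε) := by
        rw [mul_comm C ((k : ℝ) ^ ε), ← mul_assoc, ← Real.rpow_add hk0,
          show -(1 : ℝ) - 2 * ε + ε = -(1 : ℝ) - ε by ring, mul_comm]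
end

section
/- With c₀ as defined below, one has c₀ = (49/3)·Σ_{b ∈ ℕ³ : b₁b₂b₃ odd, gcd(b₁,b₂,b₃)=1} (b₁b₂b₃)^{−2}·Σ_{m = (m₁₂,m₁₃,m₂₃) ∈ ℕ³ : m₁₂m₁₃m₂₃ odd, gcd(m₁₂,b₃)=gcd(m₁₃,b₂)=gcd(m₂₃,b₁)=1} [μ²(m₁₂m₁₃m₂₃)/(m₁₂m₁₃m₂₃)²]·β(b,m)/τ(m₁₂m₁₃m₂₃). -/
open scoped BigOperators

attribute [local instance] Classical.propDecidable

/-- The number of (i,j), 1 ≤ i < j ≤ 3, with p dividing neither m₁₂m₁₃m₂₃ nor gcd(bᵢ,bⱼ). -/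
def NpPairs (b1 b2 b3 m12 m13 m23 p : ℕ) : ℕ :=
  (if ¬ p ∣ m12 * m13 * m23 ∧ ¬ p ∣ Nat.gcd b1 b2 then 1 else 0) +
  (if ¬ p ∣ m12 * m13 * m23 ∧ ¬ p ∣ Nat.gcd b1 b3 then 1 else 0) +
  (if ¬ p ∣ m12 * m13 * m23 ∧ ¬ p ∣ Nat.gcd b2 b3 then 1 else 0)

/-- The Euler product `β(b,m)` over odd primes. -/
noncomputable def betaBM (b1 b2 b3 m12 m13 m23 : ℕ) : ℝ :=
  ∏' p : Nat.Primes, if (p : ℕ) = 2 then 1 else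
    (1 - 1 / ((p : ℕ) : ℝ)) ^ ((3 : ℝ) / 2) *
      (1 + (NpPairs b1 b2 b3 m12 m13 m23 p : ℝ) / (2 * ((p : ℕ) : ℝ)))

/-- The constant `c(b,m)`. -/
noncomputable def cBM (b1 b2 b3 m12 m13 m23 : ℕ) : ℝ :=
  if 2 ∣ m12 * m13 * m23 then 2
  else 3 + ((if ¬ 2 ∣ Nat.gcd b1 b2 then 1 else 0) + (if ¬ 2 ∣ Nat.gcd b1 b3 then 1 else 0) +
    (if ¬ 2 ∣ Nat.gcd b2 b3 then 1 else 0))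

/-- The odd part of a natural number. -/
def oddPart (n : ℕ) : ℕ := n / 2 ^ (n.factorization 2)

/-- The general term of the series defining the constant `c₀`. -/
noncomputable def cZeroTerm : (ℕ × ℕ × ℕ) × (ℕ × ℕ × ℕ) → ℝ :=
  fun x =>
    let b1 := x.1.1; let b2 := x.1.2.1; let b3 := x.1.2.2
    let m12 := x.2.1; let m13 := x.2.2.1; let m23 := x.2.2.2
    if 0 < b1 ∧ 0 < b2 ∧ 0 < b3 ∧ 0 < m12 ∧ 0 < m13 ∧ 0 < m23 ∧
       Nat.gcd b1 (Nat.gcd b2 b3) = 1 ∧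
       Nat.gcd m12 b3 = 1 ∧ Nat.gcd m13 b2 = 1 ∧ Nat.gcd m23 b1 = 1 ∧
       Squarefree (m12 * m13 * m23)
    then betaBM b1 b2 b3 m12 m13 m23 * cBM b1 b2 b3 m12 m13 m23 /
      (((b1 : ℝ) * b2 * b3 * m12 * m13 * m23) ^ 2 *
        ((oddPart (m12 * m13 * m23)).divisors.card : ℝ))
    else 0

/-- The general term of the series restricted to odd `b` and odd squarefree `m`. -/
noncomputable def cZeroOddTerm : (ℕ × ℕ × ℕ) × (ℕ × ℕ × ℕ) → ℝ :=
  fun x =>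
    let b1 := x.1.1; let b2 := x.1.2.1; let b3 := x.1.2.2
    let m12 := x.2.1; let m13 := x.2.2.1; let m23 := x.2.2.2
    if 0 < b1 ∧ 0 < b2 ∧ 0 < b3 ∧ 0 < m12 ∧ 0 < m13 ∧ 0 < m23 ∧
       Odd (b1 * b2 * b3) ∧ Odd (m12 * m13 * m23) ∧
       Nat.gcd b1 (Nat.gcd b2 b3) = 1 ∧
       Nat.gcd m12 b3 = 1 ∧ Nat.gcd m13 b2 = 1 ∧ Nat.gcd m23 b1 = 1 ∧
       Squarefree (m12 * m13 * m23)
    then betaBM b1 b2 b3 m12 m13 m23 /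
      (((b1 : ℝ) * b2 * b3) ^ 2 * ((m12 : ℝ) * m13 * m23) ^ 2 *
        (((m12 * m13 * m23).divisors.card : ℝ)))
    else 0

lemma aux_tprod_nonneg {ι : Type*} {f : ι → ℝ} (h : ∀ i, 0 ≤ f i) : 0 ≤ ∏' i, f i := by
  by_cases hm : Multipliable f
  · exact ge_of_tendsto hm.hasProd
      (Filter.Eventually.of_forall fun s => Finset.prod_nonneg fun i _ => h i)
  · rw [tprod_eq_one_of_not_multipliable hm]; norm_num

lemma aux_tsum_ofReal {ι : Type*} (f : ι → ℝ) (h : ∀ i, 0 ≤ f i) :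
    ∑' i, f i = (∑' i, ENNReal.ofReal (f i)).toReal := by
  rw [ENNReal.tsum_toReal_eq (fun i => ENNReal.ofReal_ne_top)]
  exact tsum_congr fun i => (ENNReal.toReal_ofReal (h i)).symm

def pk (a k : ℕ) : ℕ := 2 ^ a * (2 * k + 1)

lemma pk_pos (a k : ℕ) : 0 < pk a k := Nat.mul_pos (pow_pos (by norm_num) a) (by omega)

lemma not_two_dvd_odd {M : ℕ} (hM : Odd M) : ¬ 2 ∣ M := by
  rw [Nat.odd_iff] at hM; omega

lemma factorization_two_mul (E M : ℕ) (hM : Odd M) :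
    (2 ^ E * M).factorization 2 = E := by
  have hM0 : M ≠ 0 := by rintro rfl; simp at hM
  rw [Nat.factorization_mul (by positivity) hM0]
  simp [Nat.Prime.factorization_pow, Nat.factorization_eq_zero_of_not_dvd (not_two_dvd_odd hM),
    Nat.Prime.factorization_self Nat.prime_two]

lemma pk_injective : Function.Injective (fun n : ℕ × ℕ => pk n.1 n.2) := by
  rintro ⟨a, k⟩ ⟨c, j⟩ h
  simp only [pk] at h
  have h2 : a = c := by
    have h' := congrArg (fun n => n.factorization 2) h
    rwa [factorization_two_mul _ _ (odd_two_mul_add_one k),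
      factorization_two_mul _ _ (odd_two_mul_add_one j)] at h'
  subst h2
  have h3 : 2 * k + 1 = 2 * j + 1 :=
    Nat.eq_of_mul_eq_mul_left (pow_pos (by norm_num) a) h
  simp only [Prod.mk.injEq, true_and]
  omega

lemma two_dvd_pk (a k : ℕ) : 2 ∣ pk a k ↔ a ≠ 0 := by
  constructor
  · intro h ha
    subst ha
    simp only [pk, pow_zero, one_mul] at h
    omega
  · intro ha
    rcases Nat.exists_eq_succ_of_ne_zero ha with ⟨b, rfl⟩
    exact ⟨2 ^ b * (2 * k + 1), by unfold pk; rw [pow_succ]; ring⟩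

lemma odd_dvd_pk {p : ℕ} (hp : p.Prime) (hp2 : p ≠ 2) (a k : ℕ) :
    p ∣ pk a k ↔ p ∣ 2 * k + 1 := by
  unfold pk
  rw [hp.dvd_mul]
  constructor
  · rintro (h | h)
    · exact absurd ((Nat.prime_dvd_prime_iff_eq hp Nat.prime_two).mp (hp.dvd_of_dvd_pow h)) hp2
    · exact h
  · exact Or.inr

lemma gcd_eq_one_iff (x y : ℕ) :
    Nat.gcd x y = 1 ↔ ∀ p : ℕ, p.Prime → ¬(p ∣ x ∧ p ∣ y) := by
  rw [Nat.eq_one_iff_not_exists_prime_dvd]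
  exact forall_congr' fun p => imp_congr Iff.rfl (not_congr Nat.dvd_gcd_iff)

lemma gcd3_eq_one_iff (x y z : ℕ) :
    Nat.gcd x (Nat.gcd y z) = 1 ↔ ∀ p : ℕ, p.Prime → ¬(p ∣ x ∧ p ∣ y ∧ p ∣ z) := by
  rw [Nat.eq_one_iff_not_exists_prime_dvd]
  refine forall_congr' fun p => imp_congr Iff.rfl (not_congr ?_)
  rw [Nat.dvd_gcd_iff, Nat.dvd_gcd_iff]

lemma gcd_pk_pk_eq_one_iff (e l a k : ℕ) :
    Nat.gcd (pk e l) (pk a k) = 1 ↔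
      (e = 0 ∨ a = 0) ∧ Nat.gcd (2 * l + 1) (2 * k + 1) = 1 := by
  rw [gcd_eq_one_iff, gcd_eq_one_iff]
  constructor
  · intro h
    refine ⟨?_, ?_⟩
    · by_contra hc
      push_neg at hc
      exact h 2 Nat.prime_two ⟨(two_dvd_pk e l).mpr hc.1, (two_dvd_pk a k).mpr hc.2⟩
    · intro p hp ⟨h1, h2⟩
      by_cases hp2 : p = 2
      · subst hp2; exact not_two_dvd_odd (odd_two_mul_add_one l) h1
      · exact h p hp ⟨(odd_dvd_pk hp hp2 e l).mpr h1, (odd_dvd_pk hp hp2 a k).mpr h2⟩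
  · rintro ⟨he, hg⟩ p hp ⟨h1, h2⟩
    by_cases hp2 : p = 2
    · subst hp2
      rcases he with he | he
      · exact ((two_dvd_pk e l).mp h1) he
      · exact ((two_dvd_pk a k).mp h2) he
    · exact hg p hp ⟨(odd_dvd_pk hp hp2 e l).mp h1, (odd_dvd_pk hp hp2 a k).mp h2⟩

lemma gcd3_pk_eq_one_iff (a1 k1 a2 k2 a3 k3 : ℕ) :
    Nat.gcd (pk a1 k1) (Nat.gcd (pk a2 k2) (pk a3 k3)) = 1 ↔
      (a1 = 0 ∨ a2 = 0 ∨ a3 = 0) ∧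
        Nat.gcd (2 * k1 + 1) (Nat.gcd (2 * k2 + 1) (2 * k3 + 1)) = 1 := by
  rw [gcd3_eq_one_iff, gcd3_eq_one_iff]
  constructor
  · intro h
    refine ⟨?_, ?_⟩
    · by_contra hc
      push_neg at hc
      exact h 2 Nat.prime_two ⟨(two_dvd_pk a1 k1).mpr hc.1, (two_dvd_pk a2 k2).mpr hc.2.1,
        (two_dvd_pk a3 k3).mpr hc.2.2⟩
    · intro p hp ⟨h1, h2, h3⟩
      by_cases hp2 : p = 2
      · subst hp2; exact not_two_dvd_odd (odd_two_mul_add_one k1) h1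
      · exact h p hp ⟨(odd_dvd_pk hp hp2 a1 k1).mpr h1, (odd_dvd_pk hp hp2 a2 k2).mpr h2,
          (odd_dvd_pk hp hp2 a3 k3).mpr h3⟩
  · rintro ⟨he, hg⟩ p hp ⟨h1, h2, h3⟩
    by_cases hp2 : p = 2
    · subst hp2
      rcases he with he | he | he
      · exact ((two_dvd_pk a1 k1).mp h1) he
      · exact ((two_dvd_pk a2 k2).mp h2) he
      · exact ((two_dvd_pk a3 k3).mp h3) he
    · exact hg p hp ⟨(odd_dvd_pk hp hp2 a1 k1).mp h1, (odd_dvd_pk hp hp2 a2 k2).mp h2,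
        (odd_dvd_pk hp hp2 a3 k3).mp h3⟩

lemma factorization_two_pow_mul (E M : ℕ) (hM : Odd M) (p : ℕ) :
    (2 ^ E * M).factorization p = if p = 2 then E else M.factorization p := by
  have hM0 : M ≠ 0 := by rintro rfl; simp at hM
  rw [Nat.factorization_mul (by positivity) hM0, Finsupp.add_apply,
    Nat.Prime.factorization_pow Nat.prime_two, Finsupp.single_apply]
  by_cases hp : p = 2
  · subst hp
    rw [if_pos rfl, if_pos rfl, Nat.factorization_eq_zero_of_not_dvd (not_two_dvd_odd hM), add_zero]
  · rw [if_neg (fun hc => hp hc.symm), if_neg hp, zero_add]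

lemma squarefree_two_pow_mul (E M : ℕ) (hM : Odd M) :
    Squarefree (2 ^ E * M) ↔ E ≤ 1 ∧ Squarefree M := by
  have hM0 : M ≠ 0 := by rintro rfl; simp at hM
  have hn0 : 2 ^ E * M ≠ 0 := by positivity
  rw [Nat.squarefree_iff_factorization_le_one hn0, Nat.squarefree_iff_factorization_le_one hM0]
  constructor
  · intro h
    have h2 := h 2
    rw [factorization_two_pow_mul E M hM 2, if_pos rfl] at h2
    refine ⟨h2, fun p => ?_⟩
    by_cases hp : p = 2
    · subst hp
      simp [Nat.factorization_eq_zero_of_not_dvd (not_two_dvd_odd hM)]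
    · have := h p
      rwa [factorization_two_pow_mul E M hM p, if_neg hp] at this
  · rintro ⟨hE, h⟩ p
    rw [factorization_two_pow_mul E M hM p]
    split_ifs
    · exact hE
    · exact h p

lemma oddPart_two_pow_mul (E M : ℕ) (hM : Odd M) : oddPart (2 ^ E * M) = M := by
  unfold oddPart
  rw [factorization_two_mul E M hM, Nat.mul_div_cancel_left _ (pow_pos (by norm_num) E)]

lemma pos_two_mul_add_one (k : ℕ) : 0 < 2 * k + 1 := by omega

lemma two_dvd_two_pow_mul {E M : ℕ} (hM : Odd M) : 2 ∣ 2 ^ E * M ↔ ¬ E = 0 := by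
  rw [Nat.Prime.dvd_mul Nat.prime_two]
  constructor
  · rintro (h | h)
    · intro hE; rw [hE, pow_zero] at h; exact absurd h (by norm_num)
    · exact absurd h (not_two_dvd_odd hM)
  · intro hE; exact Or.inl (dvd_pow_self 2 hE)

lemma NpPairs_pk {p : ℕ} (hp : p.Prime) (hp2 : p ≠ 2)
    (a1 k1 a2 k2 a3 k3 e12 l12 e13 l13 e23 l23 : ℕ) :
    NpPairs (pk a1 k1) (pk a2 k2) (pk a3 k3) (pk e12 l12) (pk e13 l13) (pk e23 l23) p =
      NpPairs (2 * k1 + 1) (2 * k2 + 1) (2 * k3 + 1)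
        (2 * l12 + 1) (2 * l13 + 1) (2 * l23 + 1) p := by
  have hm : p ∣ pk e12 l12 * pk e13 l13 * pk e23 l23 ↔
      p ∣ (2 * l12 + 1) * ((2 * l13 + 1) * (2 * l23 + 1)) := by
    rw [mul_assoc, hp.dvd_mul, hp.dvd_mul, hp.dvd_mul, hp.dvd_mul,
      odd_dvd_pk hp hp2, odd_dvd_pk hp hp2, odd_dvd_pk hp hp2]
  have hm' : p ∣ (2 * l12 + 1) * (2 * l13 + 1) * (2 * l23 + 1) ↔
      p ∣ (2 * l12 + 1) * ((2 * l13 + 1) * (2 * l23 + 1)) := by rw [mul_assoc]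
  have hg : ∀ a k c j : ℕ, (p ∣ Nat.gcd (pk a k) (pk c j)) ↔
      p ∣ Nat.gcd (2 * k + 1) (2 * j + 1) := fun a k c j => by
    rw [Nat.dvd_gcd_iff, Nat.dvd_gcd_iff, odd_dvd_pk hp hp2, odd_dvd_pk hp hp2]
  unfold NpPairs
  simp only [hm.trans hm'.symm, hg]

lemma betaBM_pk (a1 k1 a2 k2 a3 k3 e12 l12 e13 l13 e23 l23 : ℕ) :
    betaBM (pk a1 k1) (pk a2 k2) (pk a3 k3) (pk e12 l12) (pk e13 l13) (pk e23 l23) =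
      betaBM (2 * k1 + 1) (2 * k2 + 1) (2 * k3 + 1)
        (2 * l12 + 1) (2 * l13 + 1) (2 * l23 + 1) := by
  unfold betaBM
  refine tprod_congr fun p => ?_
  by_cases h : (p : ℕ) = 2
  · rw [if_pos h, if_pos h]
  · rw [if_neg h, if_neg h, NpPairs_pk p.2 h]

/-- The weight factor for the powers of two. -/
noncomputable def wgt (a1 a2 a3 e12 e13 e23 : ℕ) : ℝ :=
  if (a1 = 0 ∨ a2 = 0 ∨ a3 = 0) ∧ (e12 + e13 + e23 ≤ 1) ∧
     (e12 = 0 ∨ a3 = 0) ∧ (e13 = 0 ∨ a2 = 0) ∧ (e23 = 0 ∨ a1 = 0) then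
    (if ¬ e12 + e13 + e23 = 0 then (2 : ℝ)
     else 3 + ((if ¬ (¬ a1 = 0 ∧ ¬ a2 = 0) then (1 : ℝ) else 0) +
       (if ¬ (¬ a1 = 0 ∧ ¬ a3 = 0) then (1 : ℝ) else 0) +
       (if ¬ (¬ a2 = 0 ∧ ¬ a3 = 0) then (1 : ℝ) else 0))) /
    ((2 : ℝ) ^ (a1 + a2 + a3 + (e12 + e13 + e23))) ^ 2
  else 0

lemma key_pointwise (a1 k1 a2 k2 a3 k3 e12 l12 e13 l13 e23 l23 : ℕ) :
    cZeroTerm ((pk a1 k1, pk a2 k2, pk a3 k3), (pk e12 l12, pk e13 l13, pk e23 l23)) =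
      wgt a1 a2 a3 e12 e13 e23 *
        cZeroOddTerm ((2 * k1 + 1, 2 * k2 + 1, 2 * k3 + 1),
          (2 * l12 + 1, 2 * l13 + 1, 2 * l23 + 1)) := by
  have hoddM : Odd ((2 * l12 + 1) * (2 * l13 + 1) * (2 * l23 + 1)) :=
    ((odd_two_mul_add_one l12).mul (odd_two_mul_add_one l13)).mul (odd_two_mul_add_one l23)
  have hoddB : Odd ((2 * k1 + 1) * (2 * k2 + 1) * (2 * k3 + 1)) :=
    ((odd_two_mul_add_one k1).mul (odd_two_mul_add_one k2)).mul (odd_two_mul_add_one k3)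
  have hM0 : (2 * l12 + 1) * (2 * l13 + 1) * (2 * l23 + 1) ≠ 0 := by positivity
  have hprod : pk e12 l12 * pk e13 l13 * pk e23 l23 =
      2 ^ (e12 + e13 + e23) * ((2 * l12 + 1) * (2 * l13 + 1) * (2 * l23 + 1)) := by
    unfold pk; ring
  have hdvd : 2 ∣ pk e12 l12 * pk e13 l13 * pk e23 l23 ↔ ¬ e12 + e13 + e23 = 0 := by
    rw [hprod]; exact two_dvd_two_pow_mul hoddM
  have hsqf : Squarefree (pk e12 l12 * pk e13 l13 * pk e23 l23) ↔
      e12 + e13 + e23 ≤ 1 ∧ Squarefree ((2 * l12 + 1) * (2 * l13 + 1) * (2 * l23 + 1)) := by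
    rw [hprod]; exact squarefree_two_pow_mul _ _ hoddM
  have hg12 : (¬ 2 ∣ Nat.gcd (pk a1 k1) (pk a2 k2)) ↔ ¬ (¬ a1 = 0 ∧ ¬ a2 = 0) :=
    not_congr (Nat.dvd_gcd_iff.trans (and_congr (two_dvd_pk a1 k1) (two_dvd_pk a2 k2)))
  have hg13 : (¬ 2 ∣ Nat.gcd (pk a1 k1) (pk a3 k3)) ↔ ¬ (¬ a1 = 0 ∧ ¬ a3 = 0) :=
    not_congr (Nat.dvd_gcd_iff.trans (and_congr (two_dvd_pk a1 k1) (two_dvd_pk a3 k3)))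
  have hg23 : (¬ 2 ∣ Nat.gcd (pk a2 k2) (pk a3 k3)) ↔ ¬ (¬ a2 = 0 ∧ ¬ a3 = 0) :=
    not_congr (Nat.dvd_gcd_iff.trans (and_congr (two_dvd_pk a2 k2) (two_dvd_pk a3 k3)))
  simp only [cZeroTerm, cZeroOddTerm]
  split_ifs with hful hodd hodd
  · -- both conditions hold
    obtain ⟨-, -, -, -, -, -, hG3, hG12, hG13, hG23, hSQ⟩ := hful
    have hA : (a1 = 0 ∨ a2 = 0 ∨ a3 = 0) ∧ (e12 + e13 + e23 ≤ 1) ∧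
        (e12 = 0 ∨ a3 = 0) ∧ (e13 = 0 ∨ a2 = 0) ∧ (e23 = 0 ∨ a1 = 0) :=
      ⟨((gcd3_pk_eq_one_iff _ _ _ _ _ _).mp hG3).1, (hsqf.mp hSQ).1,
        ((gcd_pk_pk_eq_one_iff _ _ _ _).mp hG12).1, ((gcd_pk_pk_eq_one_iff _ _ _ _).mp hG13).1,
        ((gcd_pk_pk_eq_one_iff _ _ _ _).mp hG23).1⟩
    have hcBM : cBM (pk a1 k1) (pk a2 k2) (pk a3 k3) (pk e12 l12) (pk e13 l13) (pk e23 l23) =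
        (if ¬ e12 + e13 + e23 = 0 then (2 : ℝ)
         else 3 + ((if ¬ (¬ a1 = 0 ∧ ¬ a2 = 0) then (1 : ℝ) else 0) +
           (if ¬ (¬ a1 = 0 ∧ ¬ a3 = 0) then (1 : ℝ) else 0) +
           (if ¬ (¬ a2 = 0 ∧ ¬ a3 = 0) then (1 : ℝ) else 0))) := by
      simp only [cBM, hdvd, hg12, hg13, hg23]
    rw [betaBM_pk, hcBM, hprod, oddPart_two_pow_mul _ _ hoddM]
    unfold wgt
    rw [if_pos hA, div_mul_div_comm, mul_comm (betaBM (2 * k1 + 1) (2 * k2 + 1) (2 * k3 + 1)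
      (2 * l12 + 1) (2 * l13 + 1) (2 * l23 + 1))]
    congr 1
    simp only [pk]
    push_cast
    ring
  · -- full condition holds, odd condition fails: contradiction
    exfalso
    obtain ⟨-, -, -, -, -, -, hG3, hG12, hG13, hG23, hSQ⟩ := hful
    exact hodd ⟨by omega, by omega, by omega, by omega, by omega, by omega, hoddB, hoddM,
      ((gcd3_pk_eq_one_iff _ _ _ _ _ _).mp hG3).2,
      ((gcd_pk_pk_eq_one_iff _ _ _ _).mp hG12).2,
      ((gcd_pk_pk_eq_one_iff _ _ _ _).mp hG13).2,
      ((gcd_pk_pk_eq_one_iff _ _ _ _).mp hG23).2, (hsqf.mp hSQ).2⟩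
  · -- odd condition holds, full fails: wgt must vanish
    obtain ⟨-, -, -, -, -, -, -, -, hG3, hG12, hG13, hG23, hSQ⟩ := hodd
    by_cases hA : (a1 = 0 ∨ a2 = 0 ∨ a3 = 0) ∧ (e12 + e13 + e23 ≤ 1) ∧
        (e12 = 0 ∨ a3 = 0) ∧ (e13 = 0 ∨ a2 = 0) ∧ (e23 = 0 ∨ a1 = 0)
    · exfalso
      exact hful ⟨pk_pos a1 k1, pk_pos a2 k2, pk_pos a3 k3, pk_pos e12 l12, pk_pos e13 l13,
        pk_pos e23 l23, (gcd3_pk_eq_one_iff _ _ _ _ _ _).mpr ⟨hA.1, hG3⟩,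
        (gcd_pk_pk_eq_one_iff _ _ _ _).mpr ⟨hA.2.2.1, hG12⟩,
        (gcd_pk_pk_eq_one_iff _ _ _ _).mpr ⟨hA.2.2.2.1, hG13⟩,
        (gcd_pk_pk_eq_one_iff _ _ _ _).mpr ⟨hA.2.2.2.2, hG23⟩,
        hsqf.mpr ⟨hA.2.1, hSQ⟩⟩
    · unfold wgt
      rw [if_neg hA, zero_mul]
  · rw [mul_zero]

lemma betaBM_nonneg (b1 b2 b3 m12 m13 m23 : ℕ) : 0 ≤ betaBM b1 b2 b3 m12 m13 m23 := by
  unfold betaBM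
  refine aux_tprod_nonneg fun p => ?_
  split_ifs
  · norm_num
  · have hp2 : (2 : ℝ) ≤ ((p : ℕ) : ℝ) := by exact_mod_cast p.2.two_le
    have h1 : (0:ℝ) ≤ 1 - 1 / ((p : ℕ) : ℝ) := by
      rw [sub_nonneg]
      rw [div_le_one (by linarith)]
      linarith
    have h2 : (0:ℝ) ≤ 1 + (NpPairs b1 b2 b3 m12 m13 m23 p : ℝ) / (2 * ((p : ℕ) : ℝ)) := by
      positivity
    exact mul_nonneg (Real.rpow_nonneg h1 _) h2

lemma cBM_nonneg (b1 b2 b3 m12 m13 m23 : ℕ) : 0 ≤ cBM b1 b2 b3 m12 m13 m23 := by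
  unfold cBM
  split_ifs <;> norm_num

lemma cZeroTerm_nonneg (x : (ℕ × ℕ × ℕ) × (ℕ × ℕ × ℕ)) : 0 ≤ cZeroTerm x := by
  unfold cZeroTerm
  simp only []
  split_ifs
  · exact div_nonneg (mul_nonneg (betaBM_nonneg _ _ _ _ _ _) (cBM_nonneg _ _ _ _ _ _))
      (by positivity)
  · exact le_refl _
  
lemma cZeroOddTerm_nonneg (x : (ℕ × ℕ × ℕ) × (ℕ × ℕ × ℕ)) : 0 ≤ cZeroOddTerm x := by
  unfold cZeroOddTerm
  simp only []
  split_ifs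
  · exact div_nonneg (betaBM_nonneg _ _ _ _ _ _) (by positivity)
  · exact le_refl _

lemma wgt_nonneg (a1 a2 a3 e12 e13 e23 : ℕ) : 0 ≤ wgt a1 a2 a3 e12 e13 e23 := by
  unfold wgt
  split_ifs <;> positivity

open scoped ENNReal

lemma tsum_prod_mul {α β : Type*} (f : α → ℝ≥0∞) (g : β → ℝ≥0∞) :
    ∑' p : α × β, f p.1 * g p.2 = (∑' a, f a) * ∑' b, g b := by
  rw [ENNReal.tsum_prod']
  simp only [ENNReal.tsum_mul_left, ENNReal.tsum_mul_right]

lemma exists_pk {n : ℕ} (hn : 0 < n) : ∃ a k, n = pk a k := by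
  obtain ⟨a, m, hm, rfl⟩ := Nat.exists_eq_two_pow_mul_odd hn.ne'
  obtain ⟨k, hk⟩ := hm
  exact ⟨a, k, by rw [pk, show m = 2 * k + 1 by omega]⟩

/-- packing map for the full sum -/
def Jmap (t : ((ℕ × ℕ) × (ℕ × ℕ) × (ℕ × ℕ)) × ((ℕ × ℕ) × (ℕ × ℕ) × (ℕ × ℕ))) :
    (ℕ × ℕ × ℕ) × (ℕ × ℕ × ℕ) :=
  ((pk t.1.1.1 t.1.1.2, pk t.1.2.1.1 t.1.2.1.2, pk t.1.2.2.1 t.1.2.2.2),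
    (pk t.2.1.1 t.2.1.2, pk t.2.2.1.1 t.2.2.1.2, pk t.2.2.2.1 t.2.2.2.2))

lemma Jmap_injective : Function.Injective Jmap := by
  rintro ⟨⟨p1, p2, p3⟩, ⟨q1, q2, q3⟩⟩ ⟨⟨p1', p2', p3'⟩, ⟨q1', q2', q3'⟩⟩ h
  simp only [Jmap, Prod.mk.injEq] at h
  obtain ⟨⟨h1, h2, h3⟩, h4, h5, h6⟩ := h
  have e1 : p1 = p1' := pk_injective h1
  have e2 : p2 = p2' := pk_injective h2
  have e3 : p3 = p3' := pk_injective h3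
  have e4 : q1 = q1' := pk_injective h4
  have e5 : q2 = q2' := pk_injective h5
  have e6 : q3 = q3' := pk_injective h6
  simp [e1, e2, e3, e4, e5, e6]

/-- packing map for the odd sum -/
def J0map (t : (ℕ × ℕ × ℕ) × (ℕ × ℕ × ℕ)) : (ℕ × ℕ × ℕ) × (ℕ × ℕ × ℕ) :=
  ((2 * t.1.1 + 1, 2 * t.1.2.1 + 1, 2 * t.1.2.2 + 1),
    (2 * t.2.1 + 1, 2 * t.2.2.1 + 1, 2 * t.2.2.2 + 1))

lemma J0map_injective : Function.Injective J0map := by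
  rintro ⟨⟨p1, p2, p3⟩, ⟨q1, q2, q3⟩⟩ ⟨⟨p1', p2', p3'⟩, ⟨q1', q2', q3'⟩⟩ h
  simp only [J0map, Prod.mk.injEq] at h
  simp only [Prod.mk.injEq]
  omega

/-- the reshuffling equivalence -/
def reshuffle : (((ℕ × ℕ × ℕ) × (ℕ × ℕ × ℕ)) × ((ℕ × ℕ × ℕ) × (ℕ × ℕ × ℕ))) ≃
    (((ℕ × ℕ) × (ℕ × ℕ) × (ℕ × ℕ)) × ((ℕ × ℕ) × (ℕ × ℕ) × (ℕ × ℕ))) where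
  toFun p := (((p.1.1.1, p.2.1.1), (p.1.1.2.1, p.2.1.2.1), (p.1.1.2.2, p.2.1.2.2)),
    ((p.1.2.1, p.2.2.1), (p.1.2.2.1, p.2.2.2.1), (p.1.2.2.2, p.2.2.2.2)))
  invFun t := (((t.1.1.1, t.1.2.1.1, t.1.2.2.1), (t.2.1.1, t.2.2.1.1, t.2.2.2.1)),
    ((t.1.1.2, t.1.2.1.2, t.1.2.2.2), (t.2.1.2, t.2.2.1.2, t.2.2.2.2)))
  left_inv p := rfl
  right_inv t := rfl

lemma rtwo_pow_sq (S : ℕ) : (((2:ℝ)) ^ S) ^ 2 = 4 ^ S := by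
  rw [← pow_mul, mul_comm, pow_mul]; norm_num

lemma tsum_ofReal_geom (c : ℝ) (hc : 0 ≤ c) :
    ∑' n : ℕ, ENNReal.ofReal (c * (1/4) ^ n) = ENNReal.ofReal (c * (4/3)) := by
  rw [← ENNReal.ofReal_tsum_of_nonneg (fun n => by positivity)
    ((summable_geometric_of_lt_one (by norm_num) (by norm_num)).mul_left c)]
  congr 1
  rw [tsum_mul_left, tsum_geometric_of_lt_one (by norm_num) (by norm_num)]
  norm_num

lemma tsum_ofReal_geom_succ (c : ℝ) (hc : 0 ≤ c) :
    ∑' n : ℕ, ENNReal.ofReal (c * (1/4) ^ (n+1)) = ENNReal.ofReal (c * (1/3)) := by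
  rw [tsum_congr fun n => congrArg ENNReal.ofReal
    (show c * (1/4:ℝ) ^ (n+1) = (c/4) * (1/4)^n by ring),
    tsum_ofReal_geom (c/4) (by positivity)]
  congr 1; ring

lemma sum_w100 : ∑' a : ℕ × ℕ × ℕ, ENNReal.ofReal (wgt a.1 a.2.1 a.2.2 1 0 0) =
    ENNReal.ofReal (8/9) := by
  rw [ENNReal.tsum_prod']
  have inner2 : ∀ a1 : ℕ, ∑' b : ℕ × ℕ, ENNReal.ofReal (wgt a1 b.1 b.2 1 0 0) =
      ENNReal.ofReal ((1/2 * (1/4)^a1) * (4/3)) := by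
    intro a1
    rw [ENNReal.tsum_prod']
    have inner3 : ∀ a2 : ℕ, ∑' a3 : ℕ, ENNReal.ofReal (wgt a1 a2 a3 1 0 0) =
        ENNReal.ofReal ((1/2 * (1/4)^a1) * (1/4)^a2) := by
      intro a2
      rw [tsum_eq_sum (s := ({0} : Finset ℕ)) (by
        intro a3 h3
        have h3' : a3 ≠ 0 := by simpa using h3
        rw [show wgt a1 a2 a3 1 0 0 = 0 from by unfold wgt; rw [if_neg (by omega)],
          ENNReal.ofReal_zero]), Finset.sum_singleton]
      congr 1
      unfold wgt
      rw [if_pos (by omega), if_pos (by omega), rtwo_pow_sq]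
      rw [show a1 + a2 + 0 + (1 + 0 + 0) = a1 + a2 + 1 from by omega]
      simp only [one_div, inv_pow]
      field_simp
      ring
    rw [tsum_congr inner3, tsum_ofReal_geom _ (by positivity)]
  rw [tsum_congr inner2,
    tsum_congr fun a1 => congrArg ENNReal.ofReal
      (show (1/2 * (1/4:ℝ)^a1) * (4/3) = (2/3) * (1/4)^a1 by ring),
    tsum_ofReal_geom _ (by norm_num)]
  norm_num

lemma sum_w010 : ∑' a : ℕ × ℕ × ℕ, ENNReal.ofReal (wgt a.1 a.2.1 a.2.2 0 1 0) =
    ENNReal.ofReal (8/9) := by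
  rw [ENNReal.tsum_prod']
  have inner2 : ∀ a1 : ℕ, ∑' b : ℕ × ℕ, ENNReal.ofReal (wgt a1 b.1 b.2 0 1 0) =
      ENNReal.ofReal ((1/2 * (1/4)^a1) * (4/3)) := by
    intro a1
    rw [ENNReal.tsum_prod']
    rw [tsum_eq_sum (s := ({0} : Finset ℕ)) (by
      intro a2 h2
      have h2' : a2 ≠ 0 := by simpa using h2
      rw [show (∑' a3 : ℕ, ENNReal.ofReal (wgt a1 a2 a3 0 1 0)) = ∑' _ : ℕ, 0 from
        tsum_congr fun a3 => by
          rw [show wgt a1 a2 a3 0 1 0 = 0 from by unfold wgt; rw [if_neg (by omega)],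
            ENNReal.ofReal_zero], tsum_zero]), Finset.sum_singleton]
    have inner3 : ∀ a3 : ℕ, ENNReal.ofReal (wgt a1 0 a3 0 1 0) =
        ENNReal.ofReal ((1/2 * (1/4)^a1) * (1/4)^a3) := by
      intro a3
      congr 1
      unfold wgt
      rw [if_pos (by omega), if_pos (by omega), rtwo_pow_sq]
      rw [show a1 + 0 + a3 + (0 + 1 + 0) = a1 + a3 + 1 from by omega]
      simp only [one_div, inv_pow]
      field_simp
      ring
    rw [tsum_congr inner3, tsum_ofReal_geom _ (by positivity)]
  rw [tsum_congr inner2,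
    tsum_congr fun a1 => congrArg ENNReal.ofReal
      (show (1/2 * (1/4:ℝ)^a1) * (4/3) = (2/3) * (1/4)^a1 by ring),
    tsum_ofReal_geom _ (by norm_num)]
  norm_num

lemma sum_w001 : ∑' a : ℕ × ℕ × ℕ, ENNReal.ofReal (wgt a.1 a.2.1 a.2.2 0 0 1) =
    ENNReal.ofReal (8/9) := by
  rw [ENNReal.tsum_prod']
  rw [tsum_eq_sum (s := ({0} : Finset ℕ)) (by
    intro a1 h1
    have h1' : a1 ≠ 0 := by simpa using h1
    rw [show (∑' b : ℕ × ℕ, ENNReal.ofReal (wgt a1 b.1 b.2 0 0 1)) = ∑' _ : ℕ × ℕ, 0 from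
      tsum_congr fun b => by
        rw [show wgt a1 b.1 b.2 0 0 1 = 0 from by unfold wgt; rw [if_neg (by omega)],
          ENNReal.ofReal_zero], tsum_zero]), Finset.sum_singleton]
  rw [ENNReal.tsum_prod']
  have inner2 : ∀ a2 : ℕ, ∑' a3 : ℕ, ENNReal.ofReal (wgt 0 a2 a3 0 0 1) =
      ENNReal.ofReal ((1/2 * (1/4)^a2) * (4/3)) := by
    intro a2
    have inner3 : ∀ a3 : ℕ, ENNReal.ofReal (wgt 0 a2 a3 0 0 1) =
        ENNReal.ofReal ((1/2 * (1/4)^a2) * (1/4)^a3) := by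
      intro a3
      congr 1
      unfold wgt
      rw [if_pos (by omega), if_pos (by omega), rtwo_pow_sq]
      rw [show 0 + a2 + a3 + (0 + 0 + 1) = a2 + a3 + 1 from by omega]
      simp only [one_div, inv_pow]
      field_simp
      ring
    rw [tsum_congr inner3, tsum_ofReal_geom _ (by positivity)]
  rw [tsum_congr inner2,
    tsum_congr fun a2 => congrArg ENNReal.ofReal
      (show (1/2 * (1/4:ℝ)^a2) * (4/3) = (2/3) * (1/4)^a2 by ring),
    tsum_ofReal_geom _ (by norm_num)]
  norm_num

lemma w0_leafA : ∑' a3 : ℕ, ENNReal.ofReal (wgt 0 0 a3 0 0 0) = ENNReal.ofReal 8 := by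
  have hc : ∀ a3 : ℕ, wgt 0 0 a3 0 0 0 = 6 * (1/4)^a3 := by
    intro a3
    unfold wgt
    rw [if_pos (by omega), if_neg (by omega), if_pos (by omega), if_pos (by omega),
      rtwo_pow_sq, show 0+0+a3+(0+0+0) = a3 from by omega]
    simp only [one_div, inv_pow]
    field_simp
    ring
  rw [tsum_congr fun a3 => congrArg ENNReal.ofReal (hc a3), tsum_ofReal_geom 6 (by norm_num)]
  norm_num

lemma w0_leafB (n : ℕ) : ∑' a3 : ℕ, ENNReal.ofReal (wgt 0 (n+1) a3 0 0 0) =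
    ENNReal.ofReal ((23/3) * (1/4)^(n+1)) := by
  rw [tsum_eq_zero_add' ENNReal.summable]
  have h0 : wgt 0 (n+1) 0 0 0 0 = 6 * (1/4)^(n+1) := by
    unfold wgt
    rw [if_pos (by omega), if_neg (by omega), if_pos (by omega), if_pos (by omega),
      if_pos (by omega), rtwo_pow_sq, show 0+(n+1)+0+(0+0+0) = n+1 from by omega]
    simp only [one_div, inv_pow]
    field_simp
    ring
  have ht : ∀ m : ℕ, wgt 0 (n+1) (m+1) 0 0 0 = (5 * (1/4)^(n+1)) * (1/4)^(m+1) := by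
    intro m
    unfold wgt
    rw [if_pos (by omega), if_neg (by omega), if_pos (by omega), if_pos (by omega),
      if_neg (by omega), rtwo_pow_sq, show 0+(n+1)+(m+1)+(0+0+0) = (n+1)+(m+1) from by omega]
    rw [pow_add]
    simp only [one_div, inv_pow]
    field_simp
    ring
  rw [h0, tsum_congr fun m => congrArg ENNReal.ofReal (ht m),
    tsum_ofReal_geom_succ _ (by positivity),
    ← ENNReal.ofReal_add (by positivity) (by positivity)]
  congr 1
  ring

lemma w0_leafC (t : ℕ) : ∑' a3 : ℕ, ENNReal.ofReal (wgt (t+1) 0 a3 0 0 0) =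
    ENNReal.ofReal ((23/3) * (1/4)^(t+1)) := by
  rw [tsum_eq_zero_add' ENNReal.summable]
  have h0 : wgt (t+1) 0 0 0 0 0 = 6 * (1/4)^(t+1) := by
    unfold wgt
    rw [if_pos (by omega), if_neg (by omega), if_pos (by omega), if_pos (by omega),
      rtwo_pow_sq, show (t+1)+0+0+(0+0+0) = t+1 from by omega]
    simp only [one_div, inv_pow]
    field_simp
    ring
  have ht : ∀ m : ℕ, wgt (t+1) 0 (m+1) 0 0 0 = (5 * (1/4)^(t+1)) * (1/4)^(m+1) := by
    intro m
    unfold wgt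
    rw [if_pos (by omega), if_neg (by omega), if_pos (by omega), if_neg (by omega),
      if_pos (by omega), rtwo_pow_sq, show (t+1)+0+(m+1)+(0+0+0) = (t+1)+(m+1) from by omega]
    rw [pow_add]
    simp only [one_div, inv_pow]
    field_simp
    ring
  rw [h0, tsum_congr fun m => congrArg ENNReal.ofReal (ht m),
    tsum_ofReal_geom_succ _ (by positivity),
    ← ENNReal.ofReal_add (by positivity) (by positivity)]
  congr 1
  ring

lemma w0_leafD (t n : ℕ) : ∑' a3 : ℕ, ENNReal.ofReal (wgt (t+1) (n+1) a3 0 0 0) =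
    ENNReal.ofReal (((5/3) * (1/4)^(t+1)) * (1/4)^(n+1) * 3) := by
  rw [tsum_eq_sum (s := ({0} : Finset ℕ)) (by
    intro a3 h3
    have h3' : a3 ≠ 0 := by simpa using h3
    rw [show wgt (t+1) (n+1) a3 0 0 0 = 0 from by unfold wgt; rw [if_neg (by omega)],
      ENNReal.ofReal_zero]), Finset.sum_singleton]
  congr 1
  unfold wgt
  rw [if_pos (by omega), if_neg (by omega), if_neg (by omega), if_pos (by omega),
    if_pos (by omega), rtwo_pow_sq, show (t+1)+(n+1)+0+(0+0+0) = (t+1)+(n+1) from by omega]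
  rw [pow_add]
  simp only [one_div, inv_pow]
  field_simp
  ring

lemma sum_w0 : ∑' a : ℕ × ℕ × ℕ, ENNReal.ofReal (wgt a.1 a.2.1 a.2.2 0 0 0) =
    ENNReal.ofReal (41/3) := by
  rw [ENNReal.tsum_prod']
  have inner : ∀ a1 : ℕ, (∑' b : ℕ × ℕ, ENNReal.ofReal (wgt a1 b.1 b.2 0 0 0)) =
      ∑' a2 : ℕ, ∑' a3 : ℕ, ENNReal.ofReal (wgt a1 a2 a3 0 0 0) := by
    intro a1
    rw [ENNReal.tsum_prod']
  rw [tsum_congr inner, tsum_eq_zero_add' ENNReal.summable]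
  -- head: a1 = 0
  have head : (∑' a2 : ℕ, ∑' a3 : ℕ, ENNReal.ofReal (wgt 0 a2 a3 0 0 0)) =
      ENNReal.ofReal (95/9) := by
    rw [tsum_eq_zero_add' ENNReal.summable, w0_leafA,
      tsum_congr fun n => w0_leafB n, tsum_ofReal_geom_succ _ (by norm_num),
      ← ENNReal.ofReal_add (by norm_num) (by positivity)]
    norm_num
  have tail : ∀ t : ℕ, (∑' a2 : ℕ, ∑' a3 : ℕ, ENNReal.ofReal (wgt (t+1) a2 a3 0 0 0)) =
      ENNReal.ofReal ((28/3) * (1/4)^(t+1)) := by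
    intro t
    rw [tsum_eq_zero_add' ENNReal.summable, w0_leafC,
      tsum_congr fun n => w0_leafD t n,
      tsum_congr fun n => congrArg ENNReal.ofReal
        (show ((5/3) * ((1/4):ℝ)^(t+1)) * (1/4)^(n+1) * 3 = (5 * (1/4)^(t+1)) * (1/4)^(n+1) by
          ring),
      tsum_ofReal_geom_succ _ (by positivity),
      ← ENNReal.ofReal_add (by positivity) (by positivity)]
    congr 1
    ring
  rw [head, tsum_congr tail, tsum_ofReal_geom_succ _ (by norm_num),
    ← ENNReal.ofReal_add (by norm_num) (by norm_num)]
  norm_num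

lemma weight_sum' :
    ∑' e : (ℕ × ℕ × ℕ) × (ℕ × ℕ × ℕ),
      ENNReal.ofReal (wgt e.1.1 e.1.2.1 e.1.2.2 e.2.1 e.2.2.1 e.2.2.2) = 49 / 3 := by
  rw [ENNReal.tsum_prod']
  have hE : ∀ a : ℕ × ℕ × ℕ, ∑' ε : ℕ × ℕ × ℕ,
      ENNReal.ofReal (wgt a.1 a.2.1 a.2.2 ε.1 ε.2.1 ε.2.2) =
      ENNReal.ofReal (wgt a.1 a.2.1 a.2.2 0 0 0) +
        (ENNReal.ofReal (wgt a.1 a.2.1 a.2.2 0 0 1) +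
          (ENNReal.ofReal (wgt a.1 a.2.1 a.2.2 0 1 0) +
            ENNReal.ofReal (wgt a.1 a.2.1 a.2.2 1 0 0))) := by
    intro a
    rw [tsum_eq_sum (s := ({(0,0,0), (0,0,1), (0,1,0), (1,0,0)} : Finset (ℕ × ℕ × ℕ))) (by
      rintro ⟨x, y, z⟩ hns
      have h2 : 2 ≤ x + y + z := by
        by_contra hc
        apply hns
        simp only [Finset.mem_insert, Finset.mem_singleton, Prod.mk.injEq]
        omega
      rw [show wgt a.1 a.2.1 a.2.2 x y z = 0 from by unfold wgt; rw [if_neg (by omega)],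
        ENNReal.ofReal_zero])]
    rw [Finset.sum_insert (by decide), Finset.sum_insert (by decide),
      Finset.sum_insert (by decide), Finset.sum_singleton]
  rw [tsum_congr hE, ENNReal.tsum_add, ENNReal.tsum_add, ENNReal.tsum_add,
    sum_w0, sum_w001, sum_w010, sum_w100,
    ← ENNReal.ofReal_add (by norm_num) (by norm_num),
    ← ENNReal.ofReal_add (by norm_num) (by norm_num),
    ← ENNReal.ofReal_add (by norm_num) (by norm_num)]
  rw [show (41/3 + (8/9 + (8/9 + 8/9)) : ℝ) = 49/3 from by norm_num,
    ENNReal.ofReal_div_of_pos (by norm_num)]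
  norm_num

lemma weight_sum :
    ∑' e : (ℕ × ℕ × ℕ) × (ℕ × ℕ × ℕ),
      ENNReal.ofReal (wgt e.1.1 e.1.2.1 e.1.2.2 e.2.1 e.2.2.1 e.2.2.2) = 49 / 3 :=
  weight_sum'

lemma main_ennreal :
    ∑' x, ENNReal.ofReal (cZeroTerm x) =
      (49 / 3 : ℝ≥0∞) * ∑' x, ENNReal.ofReal (cZeroOddTerm x) := by
  have step1 : ∑' x, ENNReal.ofReal (cZeroTerm x) =
      ∑' t, ENNReal.ofReal (cZeroTerm (Jmap t)) := by
    refine (Function.Injective.tsum_eq (f := fun x => ENNReal.ofReal (cZeroTerm x)) Jmap_injective fun x hx => ?_).symm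
    rw [Function.mem_support] at hx
    have hpos : 0 < x.1.1 ∧ 0 < x.1.2.1 ∧ 0 < x.1.2.2 ∧ 0 < x.2.1 ∧ 0 < x.2.2.1 ∧
        0 < x.2.2.2 := by
      by_contra hc
      apply hx
      have : cZeroTerm x = 0 := by
        unfold cZeroTerm
        simp only []
        rw [if_neg]
        tauto
      rw [this, ENNReal.ofReal_zero]
    obtain ⟨a1, k1, h1⟩ := exists_pk hpos.1
    obtain ⟨a2, k2, h2⟩ := exists_pk hpos.2.1
    obtain ⟨a3, k3, h3⟩ := exists_pk hpos.2.2.1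
    obtain ⟨e1, l1, h4⟩ := exists_pk hpos.2.2.2.1
    obtain ⟨e2, l2, h5⟩ := exists_pk hpos.2.2.2.2.1
    obtain ⟨e3, l3, h6⟩ := exists_pk hpos.2.2.2.2.2
    exact ⟨(((a1, k1), (a2, k2), (a3, k3)), ((e1, l1), (e2, l2), (e3, l3))),
      by simp only [Jmap]; rw [← h1, ← h2, ← h3, ← h4, ← h5, ← h6]⟩
  have step4 : ∑' t, ENNReal.ofReal (cZeroOddTerm (J0map t)) =
      ∑' x, ENNReal.ofReal (cZeroOddTerm x) := by
    refine Function.Injective.tsum_eq (f := fun x => ENNReal.ofReal (cZeroOddTerm x)) J0map_injective fun x hx => ?_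
    obtain ⟨⟨b1, b2, b3⟩, m1, m2, m3⟩ := x
    rw [Function.mem_support] at hx
    have hcond : Odd b1 ∧ Odd b2 ∧ Odd b3 ∧ Odd m1 ∧ Odd m2 ∧ Odd m3 := by
      by_contra hc
      apply hx
      have : cZeroOddTerm ((b1, b2, b3), (m1, m2, m3)) = 0 := by
        unfold cZeroOddTerm
        simp only []
        rw [if_neg]
        intro hcc
        have hb := hcc.2.2.2.2.2.2.1
        have hm := hcc.2.2.2.2.2.2.2.1
        rw [Nat.odd_mul, Nat.odd_mul] at hb hm
        tauto
      rw [this, ENNReal.ofReal_zero]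
    obtain ⟨⟨k1, hk1⟩, ⟨k2, hk2⟩, ⟨k3, hk3⟩, ⟨l1, hl1⟩, ⟨l2, hl2⟩, ⟨l3, hl3⟩⟩ := hcond
    refine ⟨((k1, k2, k3), (l1, l2, l3)), ?_⟩
    simp only [J0map, Prod.mk.injEq]
    omega
  rw [step1, ← (reshuffle.tsum_eq fun t => ENNReal.ofReal (cZeroTerm (Jmap t)))]
  have step2 : ∀ p : ((ℕ × ℕ × ℕ) × (ℕ × ℕ × ℕ)) × ((ℕ × ℕ × ℕ) × (ℕ × ℕ × ℕ)),
      ENNReal.ofReal (cZeroTerm (Jmap (reshuffle p))) =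
        ENNReal.ofReal (wgt p.1.1.1 p.1.1.2.1 p.1.1.2.2 p.1.2.1 p.1.2.2.1 p.1.2.2.2) *
          ENNReal.ofReal (cZeroOddTerm (J0map p.2)) := by
    rintro ⟨⟨⟨a1, a2, a3⟩, ⟨e1, e2, e3⟩⟩, ⟨⟨k1, k2, k3⟩, ⟨l1, l2, l3⟩⟩⟩
    show ENNReal.ofReal (cZeroTerm ((pk a1 k1, pk a2 k2, pk a3 k3),
      (pk e1 l1, pk e2 l2, pk e3 l3))) = _
    rw [key_pointwise, ENNReal.ofReal_mul (wgt_nonneg _ _ _ _ _ _)]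
    rfl
  rw [tsum_congr step2]
  rw [← step4, ← weight_sum]
  exact tsum_prod_mul
    (fun e : (ℕ × ℕ × ℕ) × (ℕ × ℕ × ℕ) =>
      ENNReal.ofReal (wgt e.1.1 e.1.2.1 e.1.2.2 e.2.1 e.2.2.1 e.2.2.2))
    (fun k => ENNReal.ofReal (cZeroOddTerm (J0map k)))

/-- Factoring out the powers of two: `c₀ = (49/3) ·` (the sum over odd `b`, `m`). -/
theorem cZero_factor_two :
    (∑' x, cZeroTerm x) = 49 / 3 * ∑' x, cZeroOddTerm x := by
  rw [aux_tsum_ofReal _ cZeroTerm_nonneg, aux_tsum_ofReal _ cZeroOddTerm_nonneg, main_ennreal,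
    ENNReal.toReal_mul]
  congr 1
  norm_num [ENNReal.toReal_div]
end

section
/- Let n ≥ 1 and let S ⊆ ℝ^{n+1} be a Lebesgue-measurable set invariant under scalar multiplication by nonzero reals (λ·x ∈ S whenever x ∈ S and λ ∈ ℝ∖{0}). Then ∫_{u ∈ ℝⁿ} 1_S(1, u₁, …, u_n) / max{1, |u₁|, …, |u_n|}^{n+1} du = ((n+1)/2)·vol( S ∩ [−1,1]^{n+1} ), where vol is Lebesgue measure on ℝ^{n+1} and the integral is the Lebesgue integral over ℝⁿ. -/
open MeasureTheory
open scoped ENNReal Pointwise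

lemma measurePreserving_cons (n : ℕ) :
    MeasurePreserving (fun p : ℝ × (Fin n → ℝ) => (Fin.cons p.1 p.2 : Fin (n+1) → ℝ))
      (volume.prod volume) volume := by
  have h := (volume_preserving_piFinSuccAbove (fun _ : Fin (n+1) => ℝ) 0).symm
    (MeasurableEquiv.piFinSuccAbove (fun _ : Fin (n+1) => ℝ) 0)
  have he : (fun p : ℝ × (Fin n → ℝ) => (Fin.cons p.1 p.2 : Fin (n+1) → ℝ))
      = ⇑(MeasurableEquiv.piFinSuccAbove (fun _ : Fin (n+1) => ℝ) 0).symm := by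
    funext p
    simp [MeasurableEquiv.piFinSuccAbove, Fin.insertNthEquiv, Fin.insertNth_zero']
  rw [he]
  exact h

lemma radial_lintegral (n : ℕ) {a : ℝ} (ha : 0 < a) :
    ∫⁻ r : ℝ, (if 0 < r ∧ r ≤ a then ENNReal.ofReal (r^n) else 0)
      = ENNReal.ofReal (a^(n+1) / (n+1)) := by
  have h1 : ∀ r : ℝ, (if 0 < r ∧ r ≤ a then ENNReal.ofReal (r^n) else 0)
      = Set.indicator (Set.Ioc 0 a) (fun r => ENNReal.ofReal (r^n)) r := by
    intro r; rw [Set.indicator_apply]; simp [Set.mem_Ioc]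
  simp_rw [h1]
  rw [lintegral_indicator measurableSet_Ioc]
  rw [← ofReal_integral_eq_lintegral_ofReal]
  · rw [← intervalIntegral.integral_of_le ha.le, integral_pow]
    norm_num
  · exact (continuous_pow n).integrableOn_Ioc
  · exact (ae_restrict_mem measurableSet_Ioc).mono fun r hr => le_of_lt (pow_pos hr.1 n)

lemma scalar_id (n : ℕ) {M : ℝ} (hM : 0 < M) :
    ENNReal.ofReal ((1/M)^(n+1) / (n+1))
      = ((n:ℝ≥0∞)+1)⁻¹ * (ENNReal.ofReal (M^(n+1)))⁻¹ := by
  rw [div_eq_mul_inv, ENNReal.ofReal_mul (by positivity), mul_comm (((n:ℝ≥0∞)+1)⁻¹)]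
  congr 1
  · rw [one_div, inv_pow, ENNReal.ofReal_inv_of_pos (by positivity)]
  · rw [ENNReal.ofReal_inv_of_pos (by positivity)]
    congr 1
    simp [ENNReal.ofReal_add]


/-- Change of variables relating the chart integral on `ℙⁿ(ℝ)` to the Lebesgue volume of
the cone in the box `[-1,1]^{n+1}`: for a measurable set `S ⊆ ℝ^{n+1}` invariant under
scaling by nonzero reals,
`∫_{u ∈ ℝⁿ} 1_S(1,u)/max{1,|u₁|,…,|uₙ|}^{n+1} du = ((n+1)/2)·vol(S ∩ [-1,1]^{n+1})`. -/
theorem chart_integral_eq_box_volume (n : ℕ) (hn : 1 ≤ n)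
    (S : Set (Fin (n + 1) → ℝ)) (hS : MeasurableSet S)
    (hinv : ∀ x ∈ S, ∀ c : ℝ, c ≠ 0 → c • x ∈ S) :
    ∫⁻ (u : Fin n → ℝ),
        S.indicator (fun _ => (1 : ℝ≥0∞)) (Fin.cons 1 u) /
          ENNReal.ofReal (max 1 ‖u‖ ^ (n + 1))
      = ((n : ℝ≥0∞) + 1) / 2 * volume (S ∩ {x | ∀ i, |x i| ≤ 1}) := by
  classical
  set B : Set (Fin (n + 1) → ℝ) := {x | ∀ i, |x i| ≤ 1} with hBdef
  have hSiff : ∀ (c : ℝ), c ≠ 0 → ∀ x : Fin (n+1) → ℝ, (c • x ∈ S ↔ x ∈ S) := by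
    intro c hc x
    constructor
    · intro h
      have h2 := hinv _ h c⁻¹ (inv_ne_zero hc)
      rwa [smul_smul, inv_mul_cancel₀ hc, one_smul] at h2
    · intro h; exact hinv _ h c hc
  have hSneg : ∀ x : Fin (n+1) → ℝ, (-x ∈ S ↔ x ∈ S) := by
    intro x
    rw [← neg_one_smul ℝ x]
    exact hSiff (-1) (by norm_num) x
  have hBmeas : MeasurableSet B := by
    have hB2 : B = ⋂ i, {x : Fin (n+1) → ℝ | |x i| ≤ 1} := by ext x; simp [hBdef]
    rw [hB2]
    exact MeasurableSet.iInter fun i =>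
      measurableSet_le ((measurable_pi_apply i).abs) measurable_const
  have hconsM : ∀ r : ℝ, Measurable (fun u : Fin n → ℝ => (Fin.cons r u : Fin (n+1) → ℝ)) := by
    intro r
    exact (measurePreserving_cons n).measurable.comp (measurable_const.prodMk measurable_id)
  set F : ℝ × (Fin n → ℝ) → ℝ≥0∞ := fun p =>
    (if 0 < p.1 ∧ p.1 * max 1 ‖p.2‖ ≤ 1 then ENNReal.ofReal (p.1 ^ n) else 0)
      * S.indicator (fun _ => (1:ℝ≥0∞)) (Fin.cons 1 p.2) with hFdef
  have hFmeas : Measurable F := by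
    apply Measurable.mul
    · apply Measurable.ite
      · exact (measurableSet_lt measurable_const measurable_fst).inter
          (measurableSet_le
            (measurable_fst.mul ((continuous_const.max (continuous_norm.comp continuous_snd)).measurable))
            measurable_const)
      · exact (measurable_fst.pow_const n).ennreal_ofReal
      · exact measurable_const
    · exact (measurable_const.indicator hS).comp ((hconsM 1).comp measurable_snd)
  -- Step A
  have stepA : ∫⁻ u : Fin n → ℝ, ∫⁻ r : ℝ, F (r, u)
      = ((n:ℝ≥0∞)+1)⁻¹ * ∫⁻ u : Fin n → ℝ,
          S.indicator (fun _ => (1 : ℝ≥0∞)) (Fin.cons 1 u) /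
            ENNReal.ofReal (max 1 ‖u‖ ^ (n + 1)) := by
    rw [← lintegral_const_mul' _ _ (by simp : ((n:ℝ≥0∞)+1)⁻¹ ≠ ⊤)]
    refine lintegral_congr fun u => ?_
    set M := max 1 ‖u‖ with hM
    have hM0 : (0:ℝ) < M := lt_of_lt_of_le one_pos (le_max_left _ _)
    have hcne : S.indicator (fun _ => (1:ℝ≥0∞)) (Fin.cons 1 u) ≠ ⊤ := by
      rw [Set.indicator_apply]; split_ifs <;> simp
    have hinner : ∫⁻ r : ℝ, F (r, u)
        = (∫⁻ r : ℝ, (if 0 < r ∧ r ≤ 1/M then ENNReal.ofReal (r^n) else 0))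
          * S.indicator (fun _ => (1:ℝ≥0∞)) (Fin.cons 1 u) := by
      rw [← lintegral_mul_const' _ _ hcne]
      refine lintegral_congr fun r => ?_
      have hcond : (0 < r ∧ r * M ≤ 1) ↔ (0 < r ∧ r ≤ 1 / M) := by
        constructor
        · rintro ⟨h0, h1⟩; exact ⟨h0, (le_div_iff₀ hM0).2 h1⟩
        · rintro ⟨h0, h1⟩; exact ⟨h0, (le_div_iff₀ hM0).1 h1⟩
      simp only [hFdef, hcond]
      simp only [← hM, hcond]
    rw [hinner, radial_lintegral n (by positivity), scalar_id n hM0, div_eq_mul_inv]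
    ring
  -- swap
  have hswap : ∫⁻ u : Fin n → ℝ, ∫⁻ r : ℝ, F (r, u) = ∫⁻ r : ℝ, ∫⁻ u : Fin n → ℝ, F (r, u) :=
    lintegral_lintegral_swap (hFmeas.comp measurable_swap).aemeasurable
  -- Step B
  have hposM : MeasurableSet {x : Fin (n+1) → ℝ | 0 < x 0} :=
    measurableSet_lt measurable_const (measurable_pi_apply 0)
  have hnegM : MeasurableSet {x : Fin (n+1) → ℝ | x 0 < 0} :=
    measurableSet_lt (measurable_pi_apply 0) measurable_const
  have hTmeas : MeasurableSet (S ∩ B ∩ {x | 0 < x 0}) := (hS.inter hBmeas).inter hposM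
  have stepB : ∫⁻ r : ℝ, ∫⁻ u : Fin n → ℝ, F (r, u)
      = volume (S ∩ B ∩ {x | 0 < x 0}) := by
    have h1 : ∫⁻ x, (S ∩ B ∩ {x | 0 < x 0}).indicator (fun _ => (1:ℝ≥0∞)) x
        = volume (S ∩ B ∩ {x | 0 < x 0}) := by
      rw [lintegral_indicator hTmeas, setLIntegral_one]
    rw [← h1, ← (measurePreserving_cons n).lintegral_comp (measurable_const.indicator hTmeas),
      lintegral_prod
        (fun z : ℝ × (Fin n → ℝ) =>
          (S ∩ B ∩ {x | 0 < x 0}).indicator (fun _ => (1:ℝ≥0∞)) (Fin.cons z.1 z.2))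
        ((measurable_const.indicator hTmeas).comp (measurePreserving_cons n).measurable).aemeasurable]
    refine lintegral_congr fun r => ?_
    rcases le_or_gt r 0 with hr0 | hr0
    · refine lintegral_congr fun u => ?_
      have h2 : (Fin.cons r u : Fin (n+1) → ℝ) ∉ S ∩ B ∩ {x | 0 < x 0} := by
        rintro ⟨-, h⟩
        simp only [Set.mem_setOf_eq, Fin.cons_zero] at h
        exact hr0.not_gt h
      rw [Set.indicator_of_notMem h2]
      simp [hFdef, hr0.not_gt]
    rcases le_or_gt r 1 with hr1 | hr1
    swap
    · refine lintegral_congr fun u => ?_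
      have hx : ¬ (r * max 1 ‖u‖ ≤ 1) := by
        have h3 : r ≤ r * max 1 ‖u‖ := le_mul_of_one_le_right (by linarith) (le_max_left _ _)
        linarith
      have h2 : (Fin.cons r u : Fin (n+1) → ℝ) ∉ S ∩ B ∩ {x | 0 < x 0} := by
        rintro ⟨⟨-, hb⟩, -⟩
        have h0 : |(Fin.cons r u : Fin (n+1) → ℝ) 0| ≤ 1 := hb 0
        rw [Fin.cons_zero, abs_le] at h0
        linarith
      rw [Set.indicator_of_notMem h2]
      simp [hFdef, hx]
    · -- main case 0 < r ≤ 1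
      set A : Set (Fin n → ℝ) :=
        {u | (Fin.cons 1 u : Fin (n+1) → ℝ) ∈ S} ∩ {u | ‖u‖ ≤ 1/r} with hAdef
      have hAmeas : MeasurableSet A :=
        ((hconsM 1) hS).inter (measurableSet_le measurable_norm measurable_const)
      have hL : ∫⁻ u : Fin n → ℝ, F (r, u) = ENNReal.ofReal (r^n) * volume A := by
        have hpt : ∀ u : Fin n → ℝ, F (r, u) = A.indicator (fun _ => ENNReal.ofReal (r^n)) u := by
          intro u
          have hiff : (0 < r ∧ r * max 1 ‖u‖ ≤ 1) ↔ ‖u‖ ≤ 1/r := by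
            constructor
            · rintro ⟨-, h⟩
              have h2 : max 1 ‖u‖ ≤ 1/r := by
                rw [le_div_iff₀ hr0]
                nlinarith [le_max_left (1:ℝ) ‖u‖]
              exact le_trans (le_max_right _ _) h2
            · intro h
              refine ⟨hr0, ?_⟩
              have h1r : (1:ℝ) ≤ 1/r := by rw [le_div_iff₀ hr0]; linarith
              have h2 : max 1 ‖u‖ ≤ 1/r := max_le h1r h
              rw [le_div_iff₀ hr0] at h2
              nlinarith
          simp only [hFdef, hiff, Set.indicator_apply, hAdef, Set.mem_inter_iff, Set.mem_setOf_eq]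
          by_cases h1 : (Fin.cons 1 u : Fin (n+1) → ℝ) ∈ S <;>
            by_cases h2 : ‖u‖ ≤ 1/r <;> simp [h1, h2]
        simp_rw [hpt]
        rw [lintegral_indicator hAmeas, setLIntegral_const]
      set C : Set (Fin n → ℝ) :=
        {u | (Fin.cons r u : Fin (n+1) → ℝ) ∈ S ∧ ‖u‖ ≤ 1} with hCdef
      have hCmeas : MeasurableSet C :=
        ((hconsM r) hS).inter (measurableSet_le measurable_norm measurable_const)
      have hR : ∫⁻ u : Fin n → ℝ,
          (S ∩ B ∩ {x | 0 < x 0}).indicator (fun _ => (1:ℝ≥0∞)) (Fin.cons r u)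
          = volume C := by
        rw [← lintegral_indicator_one hCmeas]
        refine lintegral_congr fun u => ?_
        rw [Set.indicator_apply, Set.indicator_apply]
        refine if_congr ?_ rfl rfl
        simp only [Set.mem_inter_iff, Set.mem_setOf_eq, hCdef, hBdef]
        constructor
        · rintro ⟨⟨hs, hb⟩, -⟩
          refine ⟨hs, ?_⟩
          rw [pi_norm_le_iff_of_nonneg zero_le_one]
          intro j
          have h3 := hb j.succ
          rw [Fin.cons_succ] at h3
          simpa [Real.norm_eq_abs] using h3
        · rintro ⟨hs, hnorm⟩
          refine ⟨⟨hs, ?_⟩, by simpa using hr0⟩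
          intro i
          refine Fin.cases ?_ ?_ i
          · simpa [abs_of_pos hr0] using hr1
          · intro j
            have h3 := (pi_norm_le_iff_of_nonneg zero_le_one).1 hnorm j
            simpa [Real.norm_eq_abs] using h3
      have hscale : volume C = ENNReal.ofReal (r^n) * volume A := by
        have hsets : C = r • A := by
          ext u
          rw [Set.mem_smul_set_iff_inv_smul_mem₀ hr0.ne']
          have hkey : (Fin.cons 1 (r⁻¹ • u) : Fin (n+1) → ℝ) ∈ S
              ↔ (Fin.cons r u : Fin (n+1) → ℝ) ∈ S := by
            rw [← hSiff r hr0.ne' (Fin.cons 1 (r⁻¹ • u))]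
            have hc2 : r • (Fin.cons 1 (r⁻¹ • u) : Fin (n+1) → ℝ) = Fin.cons r u := by
              funext i
              refine Fin.cases ?_ ?_ i
              · simp
              · intro j
                simp [mul_inv_cancel_left₀ hr0.ne']
            rw [hc2]
          have hnorm : ‖r⁻¹ • u‖ ≤ 1/r ↔ ‖u‖ ≤ 1 := by
            rw [norm_smul, Real.norm_eq_abs, abs_inv, abs_of_pos hr0, one_div]
            constructor
            · intro h
              have h2 : r⁻¹ * ‖u‖ ≤ r⁻¹ * 1 := by rwa [mul_one]
              exact le_of_mul_le_mul_left h2 (inv_pos.2 hr0)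
            · intro h
              calc r⁻¹ * ‖u‖ ≤ r⁻¹ * 1 := by
                    exact mul_le_mul_of_nonneg_left h (by positivity)
                _ = r⁻¹ := mul_one _
          simp only [hCdef, hAdef, Set.mem_setOf_eq, Set.mem_inter_iff]
          rw [hkey, hnorm]
        rw [hsets, Measure.addHaar_smul_of_nonneg volume hr0.le,
          Module.finrank_fintype_fun_eq_card, Fintype.card_fin]
      rw [hL, hR, hscale]
  -- negation symmetry
  have hnegvol : volume (S ∩ B ∩ {x | x 0 < 0}) = volume (S ∩ B ∩ {x | 0 < x 0}) := by
    have hsets : S ∩ B ∩ {x | x 0 < 0} = (((-1 : ℝ) • (S ∩ B ∩ {x | 0 < x 0}) : Set (Fin (n+1) → ℝ))) := by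
      ext x
      rw [Set.mem_smul_set_iff_inv_smul_mem₀ (by norm_num : (-1:ℝ) ≠ 0)]
      have hx : (-1:ℝ)⁻¹ • x = -x := by
        funext i
        simp only [Pi.smul_apply, smul_eq_mul, Pi.neg_apply]
        norm_num
      rw [hx]
      simp only [Set.mem_inter_iff, Set.mem_setOf_eq, hBdef]
      constructor
      · rintro ⟨⟨hs, hb⟩, h3⟩
        exact ⟨⟨(hSneg x).2 hs, fun i => by simpa using hb i⟩, by simpa using h3⟩
      · rintro ⟨⟨hs, hb⟩, h3⟩
        refine ⟨⟨(hSneg x).1 hs, fun i => by simpa using hb i⟩, ?_⟩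
        simpa using h3
    rw [hsets, Measure.addHaar_smul volume, Module.finrank_fintype_fun_eq_card, Fintype.card_fin]
    simp
  -- hyperplane is null
  have hzero : volume {x : Fin (n+1) → ℝ | x 0 = 0} = 0 := by
    have h1 : {x : Fin (n+1) → ℝ | x 0 = 0}
        = (LinearMap.ker (LinearMap.proj 0 : (Fin (n+1) → ℝ) →ₗ[ℝ] ℝ) : Set (Fin (n+1) → ℝ)) := by
      ext x; simp [LinearMap.mem_ker]
    rw [h1]
    refine Measure.addHaar_submodule _ _ ?_
    intro h
    have h2 : (fun _ => (1:ℝ)) ∈ LinearMap.ker (LinearMap.proj 0 : (Fin (n+1) → ℝ) →ₗ[ℝ] ℝ) := by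
      rw [h]; trivial
    simpa using h2
  -- splitting
  have hdisj : Disjoint (S ∩ B ∩ {x | 0 < x 0}) (S ∩ B ∩ {x | x 0 < 0}) := by
    rw [Set.disjoint_left]
    rintro x ⟨-, h1⟩ ⟨-, h2⟩
    exact (lt_asymm (show (0:ℝ) < x 0 from h1)) h2
  have hsplit : volume (S ∩ B) = 2 * volume (S ∩ B ∩ {x | 0 < x 0}) := by
    have hsub : S ∩ B ⊆
        ((S ∩ B ∩ {x | 0 < x 0}) ∪ (S ∩ B ∩ {x | x 0 < 0})) ∪ {x | x 0 = 0} := by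
      intro x hx
      rcases lt_trichotomy (x 0) 0 with h | h | h
      · exact Or.inl (Or.inr ⟨hx, h⟩)
      · exact Or.inr h
      · exact Or.inl (Or.inl ⟨hx, h⟩)
    apply le_antisymm
    · calc volume (S ∩ B)
          ≤ volume (((S ∩ B ∩ {x | 0 < x 0}) ∪ (S ∩ B ∩ {x | x 0 < 0})) ∪ {x | x 0 = 0}) :=
            measure_mono hsub
        _ ≤ volume ((S ∩ B ∩ {x | 0 < x 0}) ∪ (S ∩ B ∩ {x | x 0 < 0}))
            + volume {x : Fin (n+1) → ℝ | x 0 = 0} := measure_union_le _ _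
        _ ≤ (volume (S ∩ B ∩ {x | 0 < x 0}) + volume (S ∩ B ∩ {x | x 0 < 0})) + 0 := by
            rw [hzero]
            exact add_le_add (measure_union_le _ _) le_rfl
        _ = 2 * volume (S ∩ B ∩ {x | 0 < x 0}) := by rw [hnegvol, add_zero, two_mul]
    · calc 2 * volume (S ∩ B ∩ {x | 0 < x 0})
          = volume (S ∩ B ∩ {x | 0 < x 0}) + volume (S ∩ B ∩ {x | x 0 < 0}) := by
            rw [hnegvol, two_mul]
        _ = volume ((S ∩ B ∩ {x | 0 < x 0}) ∪ (S ∩ B ∩ {x | x 0 < 0})) :=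
            (measure_union hdisj ((hS.inter hBmeas).inter hnegM)).symm
        _ ≤ volume (S ∩ B) :=
            measure_mono (Set.union_subset Set.inter_subset_left Set.inter_subset_left)
  -- assembly
  have hne0 : ((n:ℝ≥0∞)+1) ≠ 0 := by simp
  have hnetop : ((n:ℝ≥0∞)+1) ≠ ⊤ := by
    simp [ENNReal.natCast_ne_top]
  have h1 := stepA
  rw [hswap, stepB] at h1
  rw [hsplit, ← mul_assoc, ENNReal.div_mul_cancel two_ne_zero ENNReal.ofNat_ne_top]
  calc ∫⁻ (u : Fin n → ℝ),
        S.indicator (fun _ => (1 : ℝ≥0∞)) (Fin.cons 1 u) /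
          ENNReal.ofReal (max 1 ‖u‖ ^ (n + 1))
      = (((n:ℝ≥0∞)+1) * ((n:ℝ≥0∞)+1)⁻¹) * ∫⁻ (u : Fin n → ℝ),
        S.indicator (fun _ => (1 : ℝ≥0∞)) (Fin.cons 1 u) /
          ENNReal.ofReal (max 1 ‖u‖ ^ (n + 1)) := by
        rw [ENNReal.mul_inv_cancel hne0 hnetop, one_mul]
    _ = ((n:ℝ≥0∞)+1) * (((n:ℝ≥0∞)+1)⁻¹ * ∫⁻ (u : Fin n → ℝ),
        S.indicator (fun _ => (1 : ℝ≥0∞)) (Fin.cons 1 u) /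
          ENNReal.ofReal (max 1 ‖u‖ ^ (n + 1))) := by rw [mul_assoc]
    _ = ((n:ℝ≥0∞)+1) * volume (S ∩ B ∩ {x | 0 < x 0}) := by rw [← h1]
end
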